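/- arXiv:1111.4399 — 7 statements merged into one kernel-verified Lean document; each statement's English description precedes it below -/
import Mathlib

section
/- Let A be a *-algebra graded by an abelian group G (i.e., A = Σ_{g∈G} A_g with A_g A_h ⊆ A_{gh} and A_g* = A_{g⁻¹}), with a linear projection F : A → A_e onto the identity component satisfying F(x) = x for x ∈ A_e and F(A_g) = 0 for g ≠ e. Let I be a self-adjoint two-sided ideal of A_e such that x I y ⊆ I whenever x ∈ A_g, y ∈ A_{g⁻¹} are homogeneous elements. Then Σ(I) ∩ A_e = I, where Σ(I) is the two-sided self-adjoint ideal of A generated by I. -/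
def IsStarIdeal {A : Type*} [NonUnitalRing A] [StarRing A] (J : Set A) : Prop :=
  (0 : A) ∈ J ∧ (∀ x ∈ J, ∀ y ∈ J, x + y ∈ J) ∧ (∀ x ∈ J, -x ∈ J) ∧
  (∀ a : A, ∀ x ∈ J, a * x ∈ J) ∧ (∀ a : A, ∀ x ∈ J, x * a ∈ J) ∧
  (∀ x ∈ J, star x ∈ J)

def genIdeal {A : Type*} [NonUnitalRing A] [StarRing A] (X : Set A) : Set A :=
  ⋂₀ {J : Set A | IsStarIdeal J ∧ X ⊆ J}

def IsStarIdealOf {A : Type*} [NonUnitalRing A] [StarRing A] (B I : Set A) : Prop :=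
  I ⊆ B ∧ (0 : A) ∈ I ∧ (∀ x ∈ I, ∀ y ∈ I, x + y ∈ I) ∧ (∀ x ∈ I, -x ∈ I) ∧
  (∀ b ∈ B, ∀ x ∈ I, b * x ∈ I ∧ x * b ∈ I) ∧ (∀ x ∈ I, star x ∈ I)

/-- Let `A` be a *-algebra graded by an abelian group `G` via homogeneous
components `D g`, with a linear projection `F` onto the identity component `D 0`
annihilating the other components.  If `I` is a self-adjoint two-sided ideal of
`D 0` with `x I y ⊆ I` for homogeneous `x ∈ D g`, `y ∈ D (-g)`, then
`Σ(I) ∩ D 0 = I`. -/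
theorem genIdeal_inter_identityComponent {A : Type*} [NonUnitalRing A] [StarRing A]
    [Module ℂ A] {G : Type*} [AddCommGroup G] (D : G → Set A)
    -- each component is a linear subspace
    (hD0 : ∀ g, (0 : A) ∈ D g)
    (hDadd : ∀ g, ∀ x ∈ D g, ∀ y ∈ D g, x + y ∈ D g)
    (hDneg : ∀ g, ∀ x ∈ D g, -x ∈ D g)
    (hDsmul : ∀ g, ∀ c : ℂ, ∀ x ∈ D g, c • x ∈ D g)
    -- multiplicativity and star of the grading
    (hDmul : ∀ g h : G, ∀ x ∈ D g, ∀ y ∈ D h, x * y ∈ D (g + h))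
    (hDstar : ∀ g : G, ∀ x ∈ D g, star x ∈ D (-g))
    -- the components span `A`
    (hspan : ∀ a : A, ∃ (s : Finset G) (f : G → A),
      (∀ g ∈ s, f g ∈ D g) ∧ a = ∑ g ∈ s, f g)
    -- the canonical projection onto the identity component
    (F : A →ₗ[ℂ] A)
    (hFid : ∀ x ∈ D (0 : G), F x = x)
    (hFzero : ∀ g : G, g ≠ 0 → ∀ x ∈ D g, F x = 0)
    -- `I` is a self-adjoint two-sided ideal of the identity component
    (I : Set A) (hI : IsStarIdealOf (D 0) I)
    -- invariance: `x I y ⊆ I` for homogeneous `x`, `y` of opposite degrees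
    (hinv : ∀ g : G, ∀ x ∈ D g, ∀ y ∈ D (-g), ∀ i ∈ I, x * i * y ∈ I) :
    genIdeal I ∩ D 0 = I := by
  classical
  obtain ⟨hIB, hI0, hIadd, hIneg, hImul, hIstar⟩ := hI
  have hFhom : ∀ g : G, ∀ x ∈ D g, F x = if g = 0 then x else 0 := by
    intro g x hx
    by_cases h : g = 0
    · subst h; simp [hFid _ hx]
    · simp [h, hFzero g h x hx]
  have hIsum : ∀ (s : Finset G) (t : G → A), (∀ g ∈ s, t g ∈ I) → ∑ g ∈ s, t g ∈ I := by
    intro s t ht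
    exact Finset.sum_induction t (· ∈ I) (fun a b ha hb => hIadd a ha b hb) hI0 ht
  have hFstar : ∀ a : A, F (star a) = star (F a) := by
    intro a
    obtain ⟨s, f, hf, rfl⟩ := hspan a
    rw [star_sum, map_sum, map_sum, star_sum]
    refine Finset.sum_congr rfl fun g hg => ?_
    rw [hFhom g (f g) (hf g hg), hFhom (-g) (star (f g)) (hDstar g _ (hf g hg))]
    by_cases h : g = 0 <;> simp [h, neg_eq_zero]
  have key1 : ∀ b : A, ∀ i ∈ I, F (b * i) ∈ I := by
    intro b i hi
    obtain ⟨s, f, hf, rfl⟩ := hspan b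
    rw [Finset.sum_mul, map_sum]
    refine hIsum _ _ fun g hg => ?_
    have hmem : f g * i ∈ D (g + 0) := hDmul g 0 _ (hf g hg) i (hIB hi)
    rw [add_zero] at hmem
    rw [hFhom g _ hmem]
    by_cases h : g = 0
    · subst h
      simpa using (hImul (f 0) (hf 0 hg) i hi).1
    · simp [h, hI0]
  have key2 : ∀ b : A, ∀ i ∈ I, F (i * b) ∈ I := by
    intro b i hi
    obtain ⟨s, f, hf, rfl⟩ := hspan b
    rw [Finset.mul_sum, map_sum]
    refine hIsum _ _ fun g hg => ?_
    have hmem : i * f g ∈ D (0 + g) := hDmul 0 g i (hIB hi) _ (hf g hg)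
    rw [zero_add] at hmem
    rw [hFhom g _ hmem]
    by_cases h : g = 0
    · subst h
      simpa using (hImul (f 0) (hf 0 hg) i hi).2
    · simp [h, hI0]
  have key3 : ∀ b c : A, ∀ i ∈ I, F (b * i * c) ∈ I := by
    intro b c i hi
    obtain ⟨s, f, hf, rfl⟩ := hspan b
    obtain ⟨t, k, hk, rfl⟩ := hspan c
    rw [Finset.sum_mul, Finset.sum_mul, map_sum]
    refine hIsum _ _ fun g hg => ?_
    rw [Finset.mul_sum, map_sum]
    refine hIsum _ _ fun g' hg' => ?_
    have hmem : f g * i * k g' ∈ D (g + 0 + g') :=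
      hDmul _ _ _ (hDmul g 0 _ (hf g hg) i (hIB hi)) _ (hk g' hg')
    rw [add_zero] at hmem
    rw [hFhom _ _ hmem]
    by_cases h : g + g' = 0
    · rw [if_pos h]
      obtain rfl : g' = -g := eq_neg_of_add_eq_zero_right h
      exact hinv g (f g) (hf g hg) (k (-g)) (hk _ hg') i hi
    · rw [if_neg h]; exact hI0
  set J : Set A := {a | F a ∈ I ∧ (∀ b : A, F (b * a) ∈ I) ∧ (∀ c : A, F (a * c) ∈ I) ∧
      ∀ b c : A, F (b * a * c) ∈ I} with hJdef
  have hJideal : IsStarIdeal J := by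
    refine ⟨⟨by simp [hI0], fun b => by simp [hI0], fun c => by simp [hI0],
        fun b c => by simp [hI0]⟩, ?_, ?_, ?_, ?_, ?_⟩
    · rintro x ⟨hx1, hx2, hx3, hx4⟩ y ⟨hy1, hy2, hy3, hy4⟩
      refine ⟨by rw [map_add]; exact hIadd _ hx1 _ hy1,
        fun b => ?_, fun c => ?_, fun b c => ?_⟩
      · rw [mul_add, map_add]; exact hIadd _ (hx2 b) _ (hy2 b)
      · rw [add_mul, map_add]; exact hIadd _ (hx3 c) _ (hy3 c)
      · rw [mul_add, add_mul, map_add]; exact hIadd _ (hx4 b c) _ (hy4 b c)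
    · rintro x ⟨hx1, hx2, hx3, hx4⟩
      refine ⟨by rw [map_neg]; exact hIneg _ hx1, fun b => ?_, fun c => ?_, fun b c => ?_⟩
      · rw [mul_neg, map_neg]; exact hIneg _ (hx2 b)
      · rw [neg_mul, map_neg]; exact hIneg _ (hx3 c)
      · rw [mul_neg, neg_mul, map_neg]; exact hIneg _ (hx4 b c)
    · rintro a x ⟨hx1, hx2, hx3, hx4⟩
      refine ⟨hx2 a, fun b => ?_, fun c => ?_, fun b c => ?_⟩
      · rw [← mul_assoc]; exact hx2 (b * a)
      · exact hx4 a c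
      · rw [show b * (a * x) * c = b * a * x * c by rw [mul_assoc b a x]]
        exact hx4 (b * a) c
    · rintro a x ⟨hx1, hx2, hx3, hx4⟩
      refine ⟨hx3 a, fun b => ?_, fun c => ?_, fun b c => ?_⟩
      · rw [← mul_assoc]; exact hx4 b a
      · rw [mul_assoc]; exact hx3 (a * c)
      · rw [show b * (x * a) * c = b * x * (a * c) by rw [mul_assoc, mul_assoc, mul_assoc]]
        exact hx4 b (a * c)
    · rintro x ⟨hx1, hx2, hx3, hx4⟩
      refine ⟨by rw [hFstar]; exact hIstar _ hx1, fun b => ?_, fun c => ?_, fun b c => ?_⟩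
      · have : b * star x = star (x * star b) := by simp [star_mul]
        rw [this, hFstar]; exact hIstar _ (hx3 (star b))
      · have : star x * c = star (star c * x) := by simp [star_mul]
        rw [this, hFstar]; exact hIstar _ (hx2 (star c))
      · have : b * star x * c = star (star c * x * star b) := by
          simp [star_mul, mul_assoc]
        rw [this, hFstar]; exact hIstar _ (hx4 (star c) (star b))
  have hIJ : I ⊆ J := by
    intro i hi
    exact ⟨by rw [hFid i (hIB hi)]; exact hi, fun b => key1 b i hi, fun c => key2 c i hi,
      fun b c => key3 b c i hi⟩
  ext a
  constructor
  · rintro ⟨ha, ha0⟩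
    have haJ : a ∈ J := ha J ⟨hJideal, hIJ⟩
    have := haJ.1
    rwa [hFid a ha0] at this
  · intro hi
    exact ⟨fun J' hJ' => hJ'.2 hi, hIB hi⟩
end

section
/- Let A be a locally matricial *-algebra (every finite subset is contained in a finite-dimensional C*-subalgebra) inside a C*-algebra, with closure Ā. Then the map I ↦ closure(I) is a bijection from the family of self-adjoint two-sided ideals of A onto the family of closed two-sided ideals of Ā, with inverse D ↦ D ∩ A. -/
def IsStarSubalg {A : Type*} [NonUnitalRing A] [StarRing A] (B : Set A) : Prop :=
  (0 : A) ∈ B ∧ (∀ x ∈ B, ∀ y ∈ B, x + y ∈ B) ∧ (∀ x ∈ B, -x ∈ B) ∧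
  (∀ x ∈ B, ∀ y ∈ B, x * y ∈ B) ∧ (∀ x ∈ B, star x ∈ B)

/-- A two-sided ideal of `A`, as a subset. -/
def IsTwoSidedIdealSet {A : Type*} [NonUnitalRing A] (J : Set A) : Prop :=
  (0 : A) ∈ J ∧ (∀ x ∈ J, ∀ y ∈ J, x + y ∈ J) ∧ (∀ x ∈ J, -x ∈ J) ∧
  (∀ a : A, ∀ x ∈ J, a * x ∈ J) ∧ (∀ a : A, ∀ x ∈ J, x * a ∈ J)

/-- `Ad` is a locally matricial dense *-subalgebra of the C*-algebra `A`: every finite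
subset of `Ad` lies in a finite-dimensional *-subalgebra (automatically a
finite-dimensional C*-subalgebra) contained in `Ad`. -/
def IsLocallyMatricialDense {A : Type*} [NonUnitalCStarAlgebra A] (Ad : Set A) : Prop :=
  IsStarSubalg Ad ∧ Dense Ad ∧
    ∀ s : Finset A, ↑s ⊆ Ad → ∃ M : Submodule ℂ A, (M : Set A) ⊆ Ad ∧ ↑s ⊆ (M : Set A) ∧
      (∀ x ∈ M, ∀ y ∈ M, x * y ∈ M) ∧ (∀ x ∈ M, star x ∈ M) ∧ FiniteDimensional ℂ M

lemma sum_star_mul_self_eq_zero {A : Type*} [NonUnitalCStarAlgebra A] {ι : Type*}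
    (s : Finset ι) (y : ι → A) (h : ∑ i ∈ s, star (y i) * y i = 0) :
    ∀ i ∈ s, y i = 0 := by
  let _ := CStarAlgebra.spectralOrder (Unitization ℂ A)
  have _ := CStarAlgebra.spectralOrderedRing (Unitization ℂ A)
  have h' : ∑ i ∈ s, star ((y i : Unitization ℂ A)) * (y i : Unitization ℂ A) = 0 := by
    have := congrArg (Unitization.inrNonUnitalStarAlgHom ℂ A) h
    rw [map_sum] at this
    simpa using this
  intro i hi
  have h0 : star ((y i : Unitization ℂ A)) * (y i : Unitization ℂ A) = 0 :=
    (Finset.sum_eq_zero_iff_of_nonneg (fun j _ => star_mul_self_nonneg _)).mp h' i hi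
  rw [← Unitization.inr_star, ← Unitization.inr_mul] at h0
  have h1 : star (y i) * y i = (0 : A) :=
    Unitization.inr_injective (h0.trans (Unitization.inr_zero ℂ).symm)
  exact (CStarRing.star_mul_self_eq_zero_iff _).mp h1

/-- Left multiplication as a linear endomorphism of a submodule. -/
def lmulMap {A : Type*} [NonUnitalCStarAlgebra A] (N : Submodule ℂ A) (h : A)
    (hN : ∀ x ∈ N, h * x ∈ N) : ↥N →ₗ[ℂ] ↥N where
  toFun z := ⟨h * ↑z, hN _ z.2⟩
  map_add' a b := Subtype.ext (mul_add _ _ _)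
  map_smul' c a := Subtype.ext (mul_smul_comm _ _ _)

/-- Right multiplication as a linear endomorphism of a submodule. -/
def rmulMap {A : Type*} [NonUnitalCStarAlgebra A] (N : Submodule ℂ A) (h : A)
    (hN : ∀ x ∈ N, x * h ∈ N) : ↥N →ₗ[ℂ] ↥N where
  toFun z := ⟨↑z * h, hN _ z.2⟩
  map_add' a b := Subtype.ext (add_mul _ _ _)
  map_smul' c a := Subtype.ext (smul_mul_assoc _ _ _)

/-- Every (not necessarily star-closed) ideal of a finite-dimensional ⋆-closed subalgebra of a
C⋆-algebra has a two-sided unit. -/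
lemma exists_ideal_unit {A : Type*} [NonUnitalCStarAlgebra A] (M N : Submodule ℂ A)
    (hmul : ∀ x ∈ M, ∀ y ∈ M, x * y ∈ M) (hstar : ∀ x ∈ M, star x ∈ M)
    (hfd : FiniteDimensional ℂ M) (hNM : N ≤ M)
    (hl : ∀ c ∈ M, ∀ x ∈ N, c * x ∈ N) (hr : ∀ c ∈ M, ∀ x ∈ N, x * c ∈ N) :
    ∃ e ∈ N, ∀ x ∈ N, e * x = x ∧ x * e = x := by
  haveI : FiniteDimensional ℂ M := hfd
  haveI hNfd : FiniteDimensional ℂ N := Submodule.finiteDimensional_of_le hNM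
  obtain ⟨s, hs⟩ : N.FG := (Submodule.fg_top N).mp (Module.finite_def.mp hNfd)
  have hsub : (↑s : Set A) ⊆ N := hs ▸ Submodule.subset_span
  -- the two auxiliary strictly positive elements
  set h : A := ∑ x ∈ s, x * star x with hh
  set h' : A := ∑ x ∈ s, star x * x with hh'
  have hhN : h ∈ N := Submodule.sum_mem _ fun x hx =>
    hr (star x) (hstar x (hNM (hsub hx))) x (hsub hx)
  have hh'N : h' ∈ N := Submodule.sum_mem _ fun x hx =>
    hl (star x) (hstar x (hNM (hsub hx))) x (hsub hx)
  -- membership in N kills star-products with elements of s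
  have spanz : ∀ z : A, (∀ x ∈ s, star x * z = 0) → ∀ y ∈ N, star y * z = 0 := by
    intro z hzero y hy
    rw [← hs] at hy
    induction hy using Submodule.span_induction with
    | mem x hx => exact hzero x hx
    | zero => simp
    | add x y hx hy ihx ihy => simp [star_add, add_mul, ihx, ihy]
    | smul a x hx ih => simp [star_smul, smul_mul_assoc, ih]
  have spanz' : ∀ z : A, (∀ x ∈ s, z * star x = 0) → ∀ y ∈ N, z * star y = 0 := by
    intro z hzero y hy
    rw [← hs] at hy
    induction hy using Submodule.span_induction with
    | mem x hx => exact hzero x hx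
    | zero => simp
    | add x y hx hy ihx ihy => simp [star_add, mul_add, ihx, ihy]
    | smul a x hx ih => simp [star_smul, mul_smul_comm, ih]
  -- h acts injectively on the left on N
  have hinj : ∀ z ∈ N, h * z = 0 → z = 0 := by
    intro z hz hz0
    have key : ∑ x ∈ s, star (star x * z) * (star x * z) = 0 := by
      have e1 : ∀ x ∈ s, star (star x * z) * (star x * z) = star z * ((x * star x) * z) := by
        intro x _
        simp only [star_mul, star_star]
        noncomm_ring
      rw [Finset.sum_congr rfl e1, ← Finset.mul_sum, ← Finset.sum_mul, ← hh, hz0, mul_zero]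
    have hxz : ∀ x ∈ s, star x * z = 0 :=
      sum_star_mul_self_eq_zero s (fun x => star x * z) key
    have : star z * z = 0 := spanz z hxz z hz
    exact (CStarRing.star_mul_self_eq_zero_iff _).mp this
  -- h' acts injectively on the right on N
  have hinj' : ∀ z ∈ N, z * h' = 0 → z = 0 := by
    intro z hz hz0
    have key : ∑ x ∈ s, star (star (z * star x)) * star (z * star x) = 0 := by
      have e1 : ∀ x ∈ s, star (star (z * star x)) * star (z * star x)
          = z * ((star x * x) * star z) := by
        intro x _
        simp only [star_mul, star_star]
        noncomm_ring
      rw [Finset.sum_congr rfl e1, ← Finset.mul_sum, ← Finset.sum_mul, ← hh', ← mul_assoc,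
        hz0, zero_mul]
    have hxz : ∀ x ∈ s, z * star x = 0 := by
      intro x hx
      have := sum_star_mul_self_eq_zero s (fun x => star (z * star x)) key x hx
      simpa using congrArg star this
    have : z * star z = 0 := spanz' z hxz z hz
    exact (CStarRing.mul_star_self_eq_zero_iff _).mp this
  have hlN : ∀ x ∈ N, h * x ∈ N := fun x hx => hl h (hNM hhN) x hx
  have hrN : ∀ x ∈ N, x * h' ∈ N := fun x hx => hr h' (hNM hh'N) x hx
  have hLinj : Function.Injective (lmulMap N h hlN) := by
    intro a b hab
    have hv : h * (↑a : A) = h * (↑b : A) := congrArg Subtype.val hab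
    have h0 : h * ((↑a : A) - ↑b) = 0 := by rw [mul_sub, hv, sub_self]
    exact Subtype.ext (sub_eq_zero.mp (hinj _ (N.sub_mem a.2 b.2) h0))
  have hRinj : Function.Injective (rmulMap N h' hrN) := by
    intro a b hab
    have hv : (↑a : A) * h' = (↑b : A) * h' := congrArg Subtype.val hab
    have h0 : ((↑a : A) - ↑b) * h' = 0 := by rw [sub_mul, hv, sub_self]
    exact Subtype.ext (sub_eq_zero.mp (hinj' _ (N.sub_mem a.2 b.2) h0))
  obtain ⟨e, he⟩ := LinearMap.injective_iff_surjective.mp hLinj ⟨h, hhN⟩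
  obtain ⟨f, hf⟩ := LinearMap.injective_iff_surjective.mp hRinj ⟨h', hh'N⟩
  have he' : h * (↑e : A) = h := congrArg Subtype.val he
  have hf' : (↑f : A) * h' = h' := congrArg Subtype.val hf
  have hleft : ∀ x ∈ N, (↑e : A) * x = x := by
    intro x hx
    have h0 : h * ((↑e : A) * x - x) = 0 := by
      rw [mul_sub, ← mul_assoc, he']
      exact sub_self _
    exact sub_eq_zero.mp (hinj _ (N.sub_mem (hl _ (hNM e.2) x hx) hx) h0)
  have hright : ∀ x ∈ N, x * (↑f : A) = x := by
    intro x hx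
    have h0 : (x * (↑f : A) - x) * h' = 0 := by
      rw [sub_mul, mul_assoc, hf']
      exact sub_self _
    exact sub_eq_zero.mp (hinj' _ (N.sub_mem (hr _ (hNM f.2) x hx) hx) h0)
  have hef : (↑e : A) = ↑f := by
    rw [← hleft ↑f f.2, hright ↑e e.2]
  exact ⟨↑e, e.2, fun x hx => ⟨hleft x hx, by rw [hef]; exact hright x hx⟩⟩

/-- A star-closed ideal of a finite-dimensional ⋆-closed subalgebra has a central projection
as unit. -/
lemma exists_star_ideal_unit {A : Type*} [NonUnitalCStarAlgebra A] (M N : Submodule ℂ A)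
    (hmul : ∀ x ∈ M, ∀ y ∈ M, x * y ∈ M) (hstar : ∀ x ∈ M, star x ∈ M)
    (hfd : FiniteDimensional ℂ M) (hNM : N ≤ M)
    (hl : ∀ c ∈ M, ∀ x ∈ N, c * x ∈ N) (hr : ∀ c ∈ M, ∀ x ∈ N, x * c ∈ N)
    (hstarN : ∀ x ∈ N, star x ∈ N) :
    ∃ e ∈ N, (∀ x ∈ N, e * x = x ∧ x * e = x) ∧ star e = e ∧ e * e = e ∧
      ∀ c ∈ M, e * c = c * e := by
  obtain ⟨e, heN, hunit⟩ := exists_ideal_unit M N hmul hstar hfd hNM hl hr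
  have hse : star e = e := by
    have h1 : star e * e = star e := (hunit (star e) (hstarN e heN)).2
    have h3 : ∀ y ∈ N, star e * y = y := by
      intro y hy
      have hy' : star y * e = star y := (hunit (star y) (hstarN y hy)).2
      calc star e * y = star (star y * e) := by rw [star_mul, star_star]
        _ = y := by rw [hy', star_star]
    rw [← h1, h3 e heN]
  have hee : e * e = e := (hunit e heN).1
  refine ⟨e, heN, hunit, hse, hee, fun c hc => ?_⟩
  have h1 : (e * c) * e = e * c := (hunit (e * c) (hr c hc e heN)).2
  have h2 : e * (c * e) = c * e := (hunit (c * e) (hl c hc e heN)).1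
  rw [← h1, mul_assoc, h2]

section Helpers

variable {A : Type*} [NonUnitalCStarAlgebra A]

lemma mul_mem_closure₂ {S T U : Set A} (hST : ∀ x ∈ S, ∀ y ∈ T, x * y ∈ U)
    {a b : A} (ha : a ∈ closure S) (hb : b ∈ closure T) : a * b ∈ closure U := by
  obtain ⟨u, hu, hua⟩ := mem_closure_iff_seq_limit.mp ha
  obtain ⟨v, hv, hvb⟩ := mem_closure_iff_seq_limit.mp hb
  exact mem_closure_of_tendsto (hua.mul hvb)
    (Filter.Eventually.of_forall fun n => hST _ (hu n) _ (hv n))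

lemma add_mem_closure' {S : Set A} (hS : ∀ x ∈ S, ∀ y ∈ S, x + y ∈ S)
    {a b : A} (ha : a ∈ closure S) (hb : b ∈ closure S) : a + b ∈ closure S := by
  obtain ⟨u, hu, hua⟩ := mem_closure_iff_seq_limit.mp ha
  obtain ⟨v, hv, hvb⟩ := mem_closure_iff_seq_limit.mp hb
  exact mem_closure_of_tendsto (hua.add hvb)
    (Filter.Eventually.of_forall fun n => hS _ (hu n) _ (hv n))

lemma neg_mem_closure' {S : Set A} (hS : ∀ x ∈ S, -x ∈ S)
    {a : A} (ha : a ∈ closure S) : -a ∈ closure S := by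
  obtain ⟨u, hu, hua⟩ := mem_closure_iff_seq_limit.mp ha
  exact mem_closure_of_tendsto hua.neg (Filter.Eventually.of_forall fun n => hS _ (hu n))

lemma star_mem_closure' {S : Set A} (hS : ∀ x ∈ S, star x ∈ S)
    {a : A} (ha : a ∈ closure S) : star a ∈ closure S := by
  obtain ⟨u, hu, hua⟩ := mem_closure_iff_seq_limit.mp ha
  exact mem_closure_of_tendsto hua.star (Filter.Eventually.of_forall fun n => hS _ (hu n))

lemma smul_mem_closure' {S : Set A} (c : ℂ) (hS : ∀ x ∈ S, c • x ∈ S)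
    {a : A} (ha : a ∈ closure S) : c • a ∈ closure S := by
  obtain ⟨u, hu, hua⟩ := mem_closure_iff_seq_limit.mp ha
  exact mem_closure_of_tendsto (hua.const_smul c)
    (Filter.Eventually.of_forall fun n => hS _ (hu n))

end Helpers

section Main

variable {A : Type*} [NonUnitalCStarAlgebra A] {Ad : Set A}

/-- Extract a finite-dimensional subalgebra containing two given elements of `Ad`. -/
lemma getM (hAd : IsLocallyMatricialDense Ad) {a b : A} (ha : a ∈ Ad) (hb : b ∈ Ad) :
    ∃ M : Submodule ℂ A, (M : Set A) ⊆ Ad ∧ a ∈ M ∧ b ∈ M ∧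
      (∀ x ∈ M, ∀ y ∈ M, x * y ∈ M) ∧ (∀ x ∈ M, star x ∈ M) ∧ FiniteDimensional ℂ M := by
  classical
  obtain ⟨M, hMAd, hsM, hmul, hstar, hfd⟩ := hAd.2.2 {a, b} (by
    intro x hx
    simp only [Finset.coe_insert, Finset.coe_singleton, Set.mem_insert_iff,
      Set.mem_singleton_iff] at hx
    rcases hx with rfl | rfl <;> assumption)
  refine ⟨M, hMAd, ?_, ?_, hmul, hstar, hfd⟩
  · exact hsM (by simp)
  · exact hsM (by simp)

/-- If a set absorbs left multiplication by `Ad`, then it is closed under `ℂ`-scalar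
multiplication at points of `Ad`. -/
lemma smul_mem_of (hAd : IsLocallyMatricialDense Ad) {J : Set A} {x : A} (hx : x ∈ Ad)
    (habs : ∀ c ∈ Ad, c * x ∈ J) (hxJ : x ∈ J) (l : ℂ) : l • x ∈ J := by
  obtain ⟨M, hMAd, hxM, _, hmul, hstar, hfd⟩ := getM hAd hx hx
  obtain ⟨e, heM, hunit⟩ := exists_ideal_unit M M hmul hstar hfd le_rfl
    (fun c hc y hy => hmul c hc y hy) (fun c hc y hy => hmul y hy c hc)
  have hex : e * x = x := (hunit x hxM).1
  have : (l • e) * x = l • x := by rw [smul_mul_assoc, hex]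
  rw [← this]
  exact habs _ (hMAd (M.smul_mem l heM))

end Main

section LemmaL

variable {A : Type*} [NonUnitalCStarAlgebra A]

/-- Key norm estimate: if `p` is a central projection of the finite-dimensional subalgebra `M`
acting as a unit on `D ∩ M`, and `m ∈ M` with `p * m = 0`, then `m` is at distance `‖m‖`
from the closed ideal `D`. -/
lemma norm_le_of_orthogonal (M : Submodule ℂ A) (D : Set A)
    (hD : IsTwoSidedIdealSet D) (hDc : IsClosed D)
    (hmul : ∀ x ∈ M, ∀ y ∈ M, x * y ∈ M) (hstar : ∀ x ∈ M, star x ∈ M)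
    (hfd : FiniteDimensional ℂ M)
    (p : A) (hpp : p * p = p) (hpst : star p = p)
    (hpcen : ∀ c ∈ M, p * c = c * p)
    (hpunit : ∀ z ∈ D, z ∈ M → p * z = z)
    (m : A) (hmM : m ∈ M) (hpm : p * m = 0) :
    ∀ z ∈ D, ‖m‖ ≤ ‖m - z‖ := by
  by_contra hcon
  push_neg at hcon
  obtain ⟨z, hzD, hz⟩ := hcon
  have hm0 : m ≠ 0 := by
    rintro rfl
    simp only [zero_sub, norm_neg, norm_zero] at hz
    exact (norm_nonneg z).not_gt hz
  set k : ℝ := ‖m‖ * ‖m‖ with hk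
  have hkpos : 0 < k := mul_pos (norm_pos_iff.mpr hm0) (norm_pos_iff.mpr hm0)
  set l : ℂ := ((k⁻¹ : ℝ) : ℂ) with hl
  set b : A := l • (star m * m) with hb
  set z₁ : A := l • (star m * z) with hz₁
  have hsmm : ‖star m * m‖ = k := CStarRing.norm_star_mul_self
  have hbM : b ∈ M := M.smul_mem l (hmul _ (hstar m hmM) _ hmM)
  have hmp : star m * p = 0 := by
    have := congrArg star hpm
    rwa [star_mul, hpst, star_zero] at this
  have hpb : p * b = 0 := by
    rw [hb, mul_smul_comm, ← mul_assoc, hpcen (star m) (hstar m hmM), hmp, zero_mul, smul_zero]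
  have hbsa : IsSelfAdjoint b := by
    rw [hb, IsSelfAdjoint, star_smul, star_mul, star_star, hl]
    congr 1
    simp
  have hnl : ‖l‖ = k⁻¹ := by
    rw [hl, Complex.norm_real, Real.norm_eq_abs, abs_of_pos (inv_pos.mpr hkpos)]
  have hbn : ‖b‖ = 1 := by
    rw [hb, norm_smul, hnl, hsmm, inv_mul_cancel₀ hkpos.ne']
  have hz₁D : z₁ ∈ D := by
    rw [hz₁, ← smul_mul_assoc]
    exact hD.2.2.2.1 _ _ hzD
  set s : ℝ := ‖b - z₁‖ with hs
  have hs0 : 0 ≤ s := norm_nonneg _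
  have hs1 : s < 1 := by
    have h1 : b - z₁ = l • (star m * (m - z)) := by
      rw [hb, hz₁, ← smul_sub, mul_sub]
    rw [hs, h1, norm_smul, hnl]
    calc k⁻¹ * ‖star m * (m - z)‖ ≤ k⁻¹ * (‖m‖ * ‖m - z‖) := by
          gcongr
          calc ‖star m * (m - z)‖ ≤ ‖star m‖ * ‖m - z‖ := norm_mul_le _ _
            _ = ‖m‖ * ‖m - z‖ := by rw [norm_star]
      _ < k⁻¹ * (‖m‖ * ‖m‖) := by
          apply (mul_lt_mul_iff_right₀ (inv_pos.mpr hkpos)).mpr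
          exact (mul_lt_mul_iff_right₀ (norm_pos_iff.mpr hm0)).mpr hz
      _ = 1 := by rw [← hk, inv_mul_cancel₀ hkpos.ne']
  -- recursive sequences of powers and ideal approximants
  set cw : ℕ → A × A := fun n => Nat.rec (b, z₁)
    (fun _ q => (q.1 * q.1, q.1 * q.2 + q.2 * q.1 - q.2 * q.2)) n with hcw
  have hstep : ∀ n : ℕ, cw (n + 1) = ((cw n).1 * (cw n).1,
      (cw n).1 * (cw n).2 + (cw n).2 * (cw n).1 - (cw n).2 * (cw n).2) := fun n => rfl
  have key : ∀ n : ℕ, (cw n).1 ∈ M ∧ p * (cw n).1 = 0 ∧ IsSelfAdjoint (cw n).1 ∧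
      ‖(cw n).1‖ = 1 ∧ (cw n).2 ∈ D ∧ ‖(cw n).1 - (cw n).2‖ ≤ s ^ (n + 1) := by
    intro n
    induction n with
    | zero => exact ⟨hbM, hpb, hbsa, hbn, hz₁D, by rw [pow_one]; exact le_of_eq rfl⟩
    | succ n ih =>
      obtain ⟨h1, h2, h3, h4, h5, h6⟩ := ih
      rw [hstep]
      refine ⟨hmul _ h1 _ h1, by rw [← mul_assoc, h2, zero_mul], ?_, ?_, ?_, ?_⟩
      · rw [IsSelfAdjoint, star_mul, h3.star_eq]
      · have hx : ‖star (cw n).1 * (cw n).1‖ = ‖(cw n).1‖ * ‖(cw n).1‖ :=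
          CStarRing.norm_star_mul_self
        rw [h3.star_eq] at hx
        simpa [hx, h4] using hx.trans (by rw [h4, one_mul])
      · have a1 : (cw n).1 * (cw n).2 ∈ D := hD.2.2.2.1 _ _ h5
        have a2 : (cw n).2 * (cw n).1 ∈ D := hD.2.2.2.2 _ _ h5
        have a3 : (cw n).2 * (cw n).2 ∈ D := hD.2.2.2.1 _ _ h5
        have a4 := hD.2.1 _ a1 _ a2
        rw [sub_eq_add_neg]
        exact hD.2.1 _ a4 _ (hD.2.2.1 _ a3)
      · have e1 : (cw n).1 * (cw n).1 -
            ((cw n).1 * (cw n).2 + (cw n).2 * (cw n).1 - (cw n).2 * (cw n).2)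
            = ((cw n).1 - (cw n).2) * ((cw n).1 - (cw n).2) := by noncomm_ring
        rw [e1]
        calc ‖((cw n).1 - (cw n).2) * ((cw n).1 - (cw n).2)‖
            ≤ ‖(cw n).1 - (cw n).2‖ * ‖(cw n).1 - (cw n).2‖ := norm_mul_le _ _
          _ ≤ s ^ (n + 1) * s ^ (n + 1) := by
              apply mul_le_mul h6 h6 (norm_nonneg _) (pow_nonneg hs0 _)
          _ = s ^ ((n + 1) + (n + 1)) := (pow_add s _ _).symm
          _ ≤ s ^ (n + 1 + 1) := pow_le_pow_of_le_one hs0 hs1.le (by omega)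
  -- compactness argument
  haveI : FiniteDimensional ℂ M := hfd
  haveI : ProperSpace (↥M) := FiniteDimensional.proper ℂ (↥M)
  set u : ℕ → ↥M := fun n => ⟨(cw n).1, (key n).1⟩ with hu
  have husph : ∀ n, u n ∈ Metric.sphere (0 : ↥M) 1 := by
    intro n
    rw [mem_sphere_zero_iff_norm]
    have : ‖u n‖ = ‖(cw n).1‖ := rfl
    rw [this, (key n).2.2.2.1]
  obtain ⟨x, hxs, φ, hφ, hconv⟩ := (isCompact_sphere (0 : ↥M) 1).tendsto_subseq husph
  have hc : Filter.Tendsto (fun n => ((cw (φ n)).1 : A)) Filter.atTop (nhds (↑x : A)) :=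
    ((continuous_subtype_val.tendsto x).comp hconv)
  have hdiff : Filter.Tendsto (fun n => (cw (φ n)).1 - (cw (φ n)).2) Filter.atTop (nhds 0) := by
    refine squeeze_zero_norm (a := fun n => s ^ (n + 1)) ?_ ?_
    · intro n
      calc ‖(cw (φ n)).1 - (cw (φ n)).2‖ ≤ s ^ (φ n + 1) := (key (φ n)).2.2.2.2.2
        _ ≤ s ^ (n + 1) := pow_le_pow_of_le_one hs0 hs1.le (by
            have : n ≤ φ n := hφ.le_apply; omega)
    · have := (tendsto_pow_atTop_nhds_zero_of_lt_one hs0 hs1).comp (Filter.tendsto_add_atTop_nat 1)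
      simpa [Function.comp_def] using this
  have hw : Filter.Tendsto (fun n => (cw (φ n)).2) Filter.atTop (nhds (↑x : A)) := by
    have := hc.sub hdiff
    simpa using this
  have hxD : (↑x : A) ∈ D := hDc.mem_of_tendsto hw
    (Filter.Eventually.of_forall fun n => (key (φ n)).2.2.2.2.1)
  have hpx : p * (↑x : A) = 0 := by
    have h1 : Filter.Tendsto (fun n => p * ((cw (φ n)).1 : A)) Filter.atTop
        (nhds (p * (↑x : A))) := hc.const_mul p
    have h2 : (fun n => p * ((cw (φ n)).1 : A)) = fun _ => (0 : A) := by
      funext n; exact (key (φ n)).2.1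
    rw [h2] at h1
    exact (tendsto_nhds_unique tendsto_const_nhds h1).symm ▸ rfl
  have hxx : (↑x : A) = 0 := by
    rw [← hpunit (↑x : A) hxD x.2, hpx]
  have hx1 : ‖(↑x : A)‖ = 1 := by
    have := mem_sphere_zero_iff_norm.mp hxs
    exact this
  rw [hxx, norm_zero] at hx1
  exact zero_ne_one hx1

end LemmaL

section Part2

variable {A : Type*} [NonUnitalCStarAlgebra A] {Ad : Set A}

/-- Closed two-sided ideals meet `Ad` in a star-closed set. -/
lemma star_mem_ideal (hAd : IsLocallyMatricialDense Ad) {D : Set A}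
    (hD : IsTwoSidedIdealSet D) {x : A} (hxD : x ∈ D) (hxAd : x ∈ Ad) : star x ∈ D := by
  obtain ⟨M, hMAd, hxM, -, hmul, hstar, hfd⟩ := getM hAd hxAd hxAd
  obtain ⟨eM, heM, heMunit⟩ := exists_ideal_unit M M hmul hstar hfd le_rfl
    (fun c hc y hy => hmul c hc y hy) (fun c hc y hy => hmul y hy c hc)
  set N : Submodule ℂ A :=
    { carrier := {z | z ∈ M ∧ z ∈ D}
      add_mem' := fun ha hb => ⟨M.add_mem ha.1 hb.1, hD.2.1 _ ha.2 _ hb.2⟩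
      zero_mem' := ⟨M.zero_mem, hD.1⟩
      smul_mem' := fun l z hz => ⟨M.smul_mem l hz.1, by
        have h1 : l • z = (l • eM) * z := by rw [smul_mul_assoc, (heMunit z hz.1).1]
        rw [h1]
        exact hD.2.2.2.1 _ _ hz.2⟩ } with hNdef
  have hNmem : ∀ z : A, z ∈ N ↔ z ∈ M ∧ z ∈ D := fun z => Iff.rfl
  have hNM : N ≤ M := fun z hz => ((hNmem z).mp hz).1
  obtain ⟨r, hrN, hrunit⟩ := exists_ideal_unit M N hmul hstar hfd hNM
    (fun c hc z hz => (hNmem _).mpr ⟨hmul c hc z ((hNmem z).mp hz).1, hD.2.2.2.1 c z ((hNmem z).mp hz).2⟩)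
    (fun c hc z hz => (hNmem _).mpr ⟨hmul z ((hNmem z).mp hz).1 c hc, hD.2.2.2.2 c z ((hNmem z).mp hz).2⟩)
  have hxxN : x * star x ∈ N := (hNmem _).mpr
    ⟨hmul x hxM (star x) (hstar x hxM), hD.2.2.2.2 (star x) x hxD⟩
  have hr1 : (x * star x) * r = x * star x := (hrunit _ hxxN).2
  set w : A := star x - star x * r with hwdef
  have e0 : star w * w =
      (x * star x) - (x * star x) * r - (star r * ((x * star x) - (x * star x) * r)) := by
    rw [hwdef, star_sub, star_mul, star_star]
    noncomm_ring
  have e1 : star w * w = 0 := by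
    rw [e0, hr1, sub_self, mul_zero, sub_zero]
  have hw0 : w = 0 := (CStarRing.star_mul_self_eq_zero_iff w).mp e1
  have hxr : star x = star x * r := by
    have := sub_eq_zero.mp (hwdef ▸ hw0)
    exact this
  rw [hxr]
  exact hD.2.2.2.1 (star x) r ((hNmem r).mp hrN).2

/-- For a closed two-sided ideal `D` and a finite-dimensional subalgebra `M ⊆ Ad`, the ideal
`D ∩ M` of `M` has a central projection as unit. -/
lemma exists_proj_unit_inter (hAd : IsLocallyMatricialDense Ad) {D : Set A}
    (hD : IsTwoSidedIdealSet D) (M : Submodule ℂ A) (hMAd : (M : Set A) ⊆ Ad)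
    (hmul : ∀ x ∈ M, ∀ y ∈ M, x * y ∈ M) (hstar : ∀ x ∈ M, star x ∈ M)
    (hfd : FiniteDimensional ℂ M) :
    ∃ p, p ∈ D ∧ p ∈ M ∧ p * p = p ∧ star p = p ∧ (∀ c ∈ M, p * c = c * p) ∧
      (∀ z ∈ D, z ∈ M → p * z = z ∧ z * p = z) := by
  obtain ⟨eM, heM, heMunit⟩ := exists_ideal_unit M M hmul hstar hfd le_rfl
    (fun c hc y hy => hmul c hc y hy) (fun c hc y hy => hmul y hy c hc)
  set N : Submodule ℂ A :=
    { carrier := {z | z ∈ M ∧ z ∈ D}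
      add_mem' := fun ha hb => ⟨M.add_mem ha.1 hb.1, hD.2.1 _ ha.2 _ hb.2⟩
      zero_mem' := ⟨M.zero_mem, hD.1⟩
      smul_mem' := fun l z hz => ⟨M.smul_mem l hz.1, by
        have h1 : l • z = (l • eM) * z := by rw [smul_mul_assoc, (heMunit z hz.1).1]
        rw [h1]
        exact hD.2.2.2.1 _ _ hz.2⟩ } with hNdef
  have hNmem : ∀ z : A, z ∈ N ↔ z ∈ M ∧ z ∈ D := fun z => Iff.rfl
  have hNM : N ≤ M := fun z hz => ((hNmem z).mp hz).1
  obtain ⟨p, hpN, hpunit, hpst, hpp, hpcen⟩ := exists_star_ideal_unit M N hmul hstar hfd hNM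
    (fun c hc z hz => (hNmem _).mpr ⟨hmul c hc z ((hNmem z).mp hz).1, hD.2.2.2.1 c z ((hNmem z).mp hz).2⟩)
    (fun c hc z hz => (hNmem _).mpr ⟨hmul z ((hNmem z).mp hz).1 c hc, hD.2.2.2.2 c z ((hNmem z).mp hz).2⟩)
    (fun z hz => (hNmem _).mpr ⟨hstar z ((hNmem z).mp hz).1,
      star_mem_ideal hAd hD ((hNmem z).mp hz).2 (hMAd ((hNmem z).mp hz).1)⟩)
  exact ⟨p, ((hNmem p).mp hpN).2, ((hNmem p).mp hpN).1, hpp, hpst, hpcen,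
    fun z hzD hzM => hpunit z ((hNmem z).mpr ⟨hzM, hzD⟩)⟩

end Part2

section Part1

variable {A : Type*} [NonUnitalCStarAlgebra A] {Ad : Set A}

/-- The hard inclusion in part 1: an element of `Ad` lying in the closure of a star ideal `I`
of `Ad` already lies in `I`. -/
lemma mem_of_mem_closure_ideal (hAd : IsLocallyMatricialDense Ad) {I : Set A}
    (hIA : I ⊆ Ad) (hI0 : (0 : A) ∈ I) (hIadd : ∀ x ∈ I, ∀ y ∈ I, x + y ∈ I)
    (hImul : ∀ b ∈ Ad, ∀ x ∈ I, b * x ∈ I ∧ x * b ∈ I)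
    (hIstar : ∀ x ∈ I, star x ∈ I)
    {a : A} (hacl : a ∈ closure I) (haAd : a ∈ Ad) : a ∈ I := by
  have hIsmul : ∀ x ∈ I, ∀ l : ℂ, l • x ∈ I := fun x hx l =>
    smul_mem_of hAd (hIA hx) (fun c hc => (hImul c hc x hx).1) hx l
  have cadd : ∀ x ∈ closure I, ∀ y ∈ closure I, x + y ∈ closure I := fun x hx y hy =>
    add_mem_closure' hIadd hx hy
  have csmul : ∀ (l : ℂ), ∀ x ∈ closure I, l • x ∈ closure I := fun l x hx =>
    smul_mem_closure' l (fun y hy => hIsmul y hy l) hx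
  have cstar : ∀ x ∈ closure I, star x ∈ closure I := fun x hx => star_mem_closure' hIstar hx
  have cmul_l : ∀ c ∈ Ad, ∀ x ∈ closure I, c * x ∈ closure I := fun c hc x hx =>
    mul_mem_closure₂ (fun c' hc' y hy => (hImul c' hc' y hy).1) (subset_closure hc) hx
  have cmul_r : ∀ c ∈ Ad, ∀ x ∈ closure I, x * c ∈ closure I := fun c hc x hx =>
    mul_mem_closure₂ (fun y hy c' hc' => (hImul c' hc' y hy).2) hx (subset_closure hc)
  obtain ⟨M, hMAd, haM, -, hmul, hstar, hfd⟩ := getM hAd haAd haAd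
  set N : Submodule ℂ A :=
    { carrier := {z | z ∈ M ∧ z ∈ closure I}
      add_mem' := fun hx hy => ⟨M.add_mem hx.1 hy.1, cadd _ hx.2 _ hy.2⟩
      zero_mem' := ⟨M.zero_mem, subset_closure hI0⟩
      smul_mem' := fun l z hz => ⟨M.smul_mem l hz.1, csmul l z hz.2⟩ } with hNdef
  have hNmem : ∀ z : A, z ∈ N ↔ z ∈ M ∧ z ∈ closure I := fun z => Iff.rfl
  have hNM : N ≤ M := fun z hz => ((hNmem z).mp hz).1
  obtain ⟨q, hqN, hqunit, hqst, hqq, -⟩ := exists_star_ideal_unit M N hmul hstar hfd hNM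
    (fun c hc z hz => (hNmem _).mpr ⟨hmul c hc z ((hNmem z).mp hz).1,
      cmul_l c (hMAd hc) z ((hNmem z).mp hz).2⟩)
    (fun c hc z hz => (hNmem _).mpr ⟨hmul z ((hNmem z).mp hz).1 c hc,
      cmul_r c (hMAd hc) z ((hNmem z).mp hz).2⟩)
    (fun z hz => (hNmem _).mpr ⟨hstar z ((hNmem z).mp hz).1, cstar z ((hNmem z).mp hz).2⟩)
  have haN : a ∈ N := (hNmem a).mpr ⟨haM, hacl⟩
  have hqa : q * a = a := (hqunit a haN).1
  by_cases hq0 : q = 0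
  · rw [← hqa, hq0, zero_mul]; exact hI0
  have hqAd : q ∈ Ad := hMAd (hNM hqN)
  have hqcl : q ∈ closure I := ((hNmem q).mp hqN).2
  have hqn : ‖q‖ = 1 := by
    have h1 : ‖q‖ * ‖q‖ = ‖q‖ := by
      calc ‖q‖ * ‖q‖ = ‖star q * q‖ := CStarRing.norm_star_mul_self.symm
        _ = ‖q * q‖ := by rw [hqst]
        _ = ‖q‖ := by rw [hqq]
    exact mul_right_cancel₀ (norm_ne_zero_iff.mpr hq0) (by rw [one_mul]; exact h1)
  obtain ⟨x, hxI, hqxd⟩ := Metric.mem_closure_iff.mp hqcl (1/4) (by norm_num)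
  have hqx : ‖q - x‖ < 1/4 := by rw [← dist_eq_norm]; exact hqxd
  set y : A := star x * x with hydef
  have hyI : y ∈ I := (hImul (star x) (hIA (hIstar x hxI)) x hxI).1
  have hqyI : q * y ∈ I := (hImul q hqAd y hyI).1
  set b : A := (q * y) * q with hbdef
  have hbI : b ∈ I := (hImul q hqAd (q * y) hqyI).2
  -- norm estimates
  have hxnorm : ‖x‖ ≤ 1 + 1/4 := by
    have e : x = q - (q - x) := by abel
    calc ‖x‖ = ‖q - (q - x)‖ := by rw [← e]
      _ ≤ ‖q‖ + ‖q - x‖ := norm_sub_le _ _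
      _ ≤ 1 + 1/4 := by rw [hqn]; linarith
  have t1 : ‖q - star x * q‖ ≤ 1/4 := by
    have e : q - star x * q = (q - star x) * q := by rw [sub_mul, hqq]
    calc ‖q - star x * q‖ = ‖(q - star x) * q‖ := by rw [e]
      _ ≤ ‖q - star x‖ * ‖q‖ := norm_mul_le _ _
      _ = ‖q - star x‖ := by rw [hqn, mul_one]
      _ = ‖star (q - x)‖ := by rw [star_sub, hqst]
      _ = ‖q - x‖ := norm_star _
      _ ≤ 1/4 := hqx.le
  have t2 : ‖star x * q - y‖ ≤ (1 + 1/4) * (1/4) := by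
    have e : star x * q - y = star x * (q - x) := by rw [hydef, mul_sub]
    calc ‖star x * q - y‖ = ‖star x * (q - x)‖ := by rw [e]
      _ ≤ ‖star x‖ * ‖q - x‖ := norm_mul_le _ _
      _ = ‖x‖ * ‖q - x‖ := by rw [norm_star]
      _ ≤ (1 + 1/4) * (1/4) :=
          mul_le_mul hxnorm hqx.le (norm_nonneg _) (by norm_num)
  have hqy : ‖q - y‖ ≤ 9/16 := by
    have e : q - y = (q - star x * q) + (star x * q - y) := by abel
    calc ‖q - y‖ = ‖(q - star x * q) + (star x * q - y)‖ := by rw [← e]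
      _ ≤ ‖q - star x * q‖ + ‖star x * q - y‖ := norm_add_le _ _
      _ ≤ 9/16 := by linarith
  have hqb1 : ‖q - b‖ < 1 := by
    have e : q - b = q * (q - y) * q := by
      rw [hbdef, mul_sub, sub_mul, hqq, hqq]
    calc ‖q - b‖ = ‖q * (q - y) * q‖ := by rw [e]
      _ ≤ ‖q * (q - y)‖ * ‖q‖ := norm_mul_le _ _
      _ ≤ ‖q‖ * ‖q - y‖ * ‖q‖ := by
          apply mul_le_mul_of_nonneg_right (norm_mul_le _ _) (norm_nonneg _)
      _ = ‖q - y‖ := by rw [hqn, one_mul, mul_one]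
      _ < 1 := lt_of_le_of_lt hqy (by norm_num)
  -- the corner algebra
  obtain ⟨M₂, hM₂Ad, hqM₂, hbM₂, hmul₂, hstar₂, hfd₂⟩ := getM hAd hqAd (hIA hbI)
  set C : Submodule ℂ A :=
    { carrier := {z | z ∈ M₂ ∧ q * z * q = z}
      add_mem' := fun hx hy => ⟨M₂.add_mem hx.1 hy.1, by rw [mul_add, add_mul, hx.2, hy.2]⟩
      zero_mem' := ⟨M₂.zero_mem, by rw [mul_zero, zero_mul]⟩
      smul_mem' := fun l z hz => ⟨M₂.smul_mem l hz.1, by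
        rw [mul_smul_comm, smul_mul_assoc, hz.2]⟩ } with hCdef
  have hCmem : ∀ z : A, z ∈ C ↔ z ∈ M₂ ∧ q * z * q = z := fun z => Iff.rfl
  have hCM₂ : C ≤ M₂ := fun z hz => ((hCmem z).mp hz).1
  have hqz : ∀ z ∈ C, q * z = z := by
    intro z hz
    have h2 := ((hCmem z).mp hz).2
    calc q * z = q * (q * z * q) := by rw [h2]
      _ = ((q * q) * z) * q := by simp only [mul_assoc]
      _ = (q * z) * q := by rw [hqq]
      _ = z := h2
  have hzq : ∀ z ∈ C, z * q = z := by
    intro z hz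
    have h2 := ((hCmem z).mp hz).2
    calc z * q = (q * z * q) * q := by rw [h2]
      _ = (q * z) * (q * q) := by simp only [mul_assoc]
      _ = (q * z) * q := by rw [hqq]
      _ = z := h2
  have hCmul : ∀ z ∈ C, ∀ w ∈ C, z * w ∈ C := by
    intro z hz w hw
    refine (hCmem _).mpr ⟨hmul₂ z (hCM₂ hz) w (hCM₂ hw), ?_⟩
    calc q * (z * w) * q = (q * z) * (w * q) := by simp only [mul_assoc]
      _ = z * w := by rw [hqz z hz, hzq w hw]
  have hqC : q ∈ C := (hCmem q).mpr ⟨hqM₂, by rw [hqq, hqq]⟩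
  have hbC : b ∈ C := by
    refine (hCmem b).mpr ⟨hbM₂, ?_⟩
    calc q * b * q = ((q * q) * y) * (q * q) := by rw [hbdef]; simp only [mul_assoc]
      _ = (q * y) * q := by rw [hqq]
      _ = b := rfl
  haveI : FiniteDimensional ℂ M₂ := hfd₂
  haveI : FiniteDimensional ℂ C := Submodule.finiteDimensional_of_le hCM₂
  have hinj : ∀ z ∈ C, b * z = 0 → z = 0 := by
    intro z hzC hbz
    have hz1 : z = (q - b) * z := by rw [sub_mul, hbz, sub_zero, hqz z hzC]
    have hbound : ∀ n : ℕ, ‖z‖ ≤ ‖q - b‖ ^ n * ‖z‖ := by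
      intro n
      induction n with
      | zero => simp
      | succ n ih =>
        calc ‖z‖ ≤ ‖q - b‖ ^ n * ‖z‖ := ih
          _ ≤ ‖q - b‖ ^ n * (‖q - b‖ * ‖z‖) := by
              apply mul_le_mul_of_nonneg_left ?_ (pow_nonneg (norm_nonneg _) n)
              calc ‖z‖ = ‖(q - b) * z‖ := by rw [← hz1]
                _ ≤ ‖q - b‖ * ‖z‖ := norm_mul_le _ _
          _ = ‖q - b‖ ^ (n + 1) * ‖z‖ := by ring
    have hlim : Filter.Tendsto (fun n : ℕ => ‖q - b‖ ^ n * ‖z‖) Filter.atTop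
        (nhds (0 * ‖z‖)) :=
      (tendsto_pow_atTop_nhds_zero_of_lt_one (norm_nonneg _) hqb1).mul_const _
    have hle : ‖z‖ ≤ 0 * ‖z‖ := ge_of_tendsto hlim (Filter.Eventually.of_forall hbound)
    rw [zero_mul] at hle
    exact norm_le_zero_iff.mp hle
  have hLinj : Function.Injective (lmulMap C b (fun z hz => hCmul b hbC z hz)) := by
    intro u v huv
    have hv : b * (↑u : A) = b * ↑v := congrArg Subtype.val huv
    have h0 : b * ((↑u : A) - ↑v) = 0 := by rw [mul_sub, hv, sub_self]
    exact Subtype.ext (sub_eq_zero.mp (hinj _ (C.sub_mem u.2 v.2) h0))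
  obtain ⟨c, hc⟩ := LinearMap.injective_iff_surjective.mp hLinj ⟨q, hqC⟩
  have hbc : b * (↑c : A) = q := congrArg Subtype.val hc
  have hqI : q ∈ I := by
    rw [← hbc]
    exact (hImul (↑c) (hM₂Ad (hCM₂ c.2)) b hbI).2
  rw [← hqa]
  exact (hImul a haAd q hqI).2

end Part1

/-- Bratteli: in a (possibly non-separable) AF-algebra `A` with dense locally matricial
*-subalgebra `Ad`, the map `I ↦ closure I` is a bijection from self-adjoint two-sided
ideals of `Ad` onto closed two-sided ideals of `A`, with inverse `D ↦ D ∩ Ad`. -/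
theorem af_ideal_bijection {A : Type*} [NonUnitalCStarAlgebra A] (Ad : Set A)
    (hAd : IsLocallyMatricialDense Ad) :
    (∀ I : Set A, IsStarIdealOf Ad I →
      IsTwoSidedIdealSet (closure I) ∧ closure I ∩ Ad = I) ∧
    (∀ D : Set A, IsTwoSidedIdealSet D → IsClosed D →
      IsStarIdealOf Ad (D ∩ Ad) ∧ closure (D ∩ Ad) = D) := by
  obtain ⟨hsubalg, hdense, hloc⟩ := hAd
  have hAd' : IsLocallyMatricialDense Ad := ⟨hsubalg, hdense, hloc⟩
  constructor
  · -- Part 1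
    intro I hI
    obtain ⟨hIA, hI0, hIadd, hIneg, hImul, hIstar⟩ := hI
    have hIsmul : ∀ x ∈ I, ∀ l : ℂ, l • x ∈ I := fun x hx l =>
      smul_mem_of hAd' (hIA hx) (fun c hc => (hImul c hc x hx).1) hx l
    constructor
    · refine ⟨subset_closure hI0, fun x hx y hy => add_mem_closure' hIadd hx hy,
        fun x hx => neg_mem_closure' hIneg hx, ?_, ?_⟩
      · intro a x hx
        exact mul_mem_closure₂ (fun c hc y hy => (hImul c hc y hy).1) (hdense a) hx
      · intro a x hx
        exact mul_mem_closure₂ (fun y hy c hc => (hImul c hc y hy).2) hx (hdense a)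
    · refine Set.Subset.antisymm ?_ (fun x hx => ⟨subset_closure hx, hIA hx⟩)
      rintro a ⟨hacl, haAd⟩
      exact mem_of_mem_closure_ideal hAd' hIA hI0 hIadd hImul hIstar hacl haAd
  · -- Part 2
    intro D hD hDc
    have hstarD : ∀ x ∈ D, x ∈ Ad → star x ∈ D := fun x hx hx' =>
      star_mem_ideal hAd' hD hx hx'
    constructor
    · exact ⟨Set.inter_subset_right, ⟨hD.1, hsubalg.1⟩,
        fun x hx y hy => ⟨hD.2.1 x hx.1 y hy.1, hsubalg.2.1 x hx.2 y hy.2⟩,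
        fun x hx => ⟨hD.2.2.1 x hx.1, hsubalg.2.2.1 x hx.2⟩,
        fun b hb x hx => ⟨⟨hD.2.2.2.1 b x hx.1, hsubalg.2.2.2.1 b hb x hx.2⟩,
          ⟨hD.2.2.2.2 b x hx.1, hsubalg.2.2.2.1 x hx.2 b hb⟩⟩,
        fun x hx => ⟨hstarD x hx.1 hx.2, hsubalg.2.2.2.2 x hx.2⟩⟩
    · refine Set.Subset.antisymm (closure_minimal Set.inter_subset_left hDc) ?_
      intro d hd
      rw [Metric.mem_closure_iff]
      intro ε hε
      obtain ⟨a, haAd, hda⟩ := Metric.mem_closure_iff.mp (hdense d) (ε / 2) (by positivity)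
      obtain ⟨M, hMAd, haM, -, hmul, hstar, hfd⟩ := getM hAd' haAd haAd
      obtain ⟨p, hpD, hpM, hpp, hpst, hpcen, hpunit⟩ :=
        exists_proj_unit_inter hAd' hD M hMAd hmul hstar hfd
      set m : A := a - p * a with hmdef
      have hmM : m ∈ M := M.sub_mem haM (hmul p hpM a haM)
      have hpm : p * m = 0 := by
        rw [hmdef, mul_sub, ← mul_assoc, hpp, sub_self]
      have hpaD : p * a ∈ D := hD.2.2.2.2 a p hpD
      have hzD : d - p * a ∈ D := by
        rw [sub_eq_add_neg]
        exact hD.2.1 d hd _ (hD.2.2.1 _ hpaD)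
      have hkey : ‖m‖ ≤ ‖m - (d - p * a)‖ :=
        norm_le_of_orthogonal M D hD hDc hmul hstar hfd p hpp hpst hpcen
          (fun z hz hzM => (hpunit z hz hzM).1) m hmM hpm _ hzD
      have heq : m - (d - p * a) = a - d := by rw [hmdef]; abel
      rw [heq] at hkey
      refine ⟨p * a, ⟨hpaD, hMAd (hmul p hpM a haM)⟩, ?_⟩
      calc dist d (p * a) ≤ dist d a + dist a (p * a) := dist_triangle _ _ _
        _ < ε / 2 + ε / 2 := by
            apply add_lt_add_of_lt_of_le hda
            calc dist a (p * a) = ‖a - p * a‖ := dist_eq_norm _ _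
              _ = ‖m‖ := by rw [hmdef]
              _ ≤ ‖a - d‖ := hkey
              _ = dist a d := (dist_eq_norm _ _).symm
              _ = dist d a := dist_comm _ _
              _ ≤ ε / 2 := hda.le
        _ = ε := by ring
end

section
/- In an AF-algebra Ā with dense locally matricial *-subalgebra A: if J₁ and J₂ are distinct self-adjoint two-sided ideals of A, then their closures in Ā are distinct. -/
section AFProofAux
open scoped Polynomial
variable {A : Type*} [NonUnitalCStarAlgebra A]

noncomputable def npow (a : A) : ℕ → A
  | 0 => a
  | (k+1) => npow a k * a

lemma npow_inr (a : A) (k : ℕ) :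
    ((npow a k : A) : Unitization ℂ A) = (a : Unitization ℂ A) ^ (k + 1) := by
  induction k with
  | zero => simp [npow]
  | succ k ih => rw [npow, Unitization.inr_mul, ih, ← pow_succ]

lemma finite_quasispectrum (M : Submodule ℂ A) [FiniteDimensional ℂ M]
    (hmul : ∀ x ∈ M, ∀ y ∈ M, x * y ∈ M) (a : A) (ha : a ∈ M) :
    (quasispectrum ℝ a).Finite := by
  have hpow : ∀ k, npow a k ∈ M := by
    intro k; induction k with
    | zero => exact ha
    | succ k ih => exact hmul _ ih _ ha
  set n := Module.finrank ℂ M with hn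
  have hdep : ¬ LinearIndependent ℂ (fun k : Fin (n+1) => (⟨npow a k, hpow k⟩ : M)) := by
    intro h
    have := h.fintype_card_le_finrank
    simp [hn] at this
  rw [Fintype.not_linearIndependent_iff] at hdep
  obtain ⟨g, hg0, i₀, hi₀⟩ := hdep
  have hsumA : ∑ i : Fin (n+1), g i • npow a (i : ℕ) = 0 := by
    have := congrArg (Subtype.val) hg0
    simpa using this
  set P : ℂ[X] := ∑ i : Fin (n+1), Polynomial.monomial ((i : ℕ) + 1) (g i) with hP
  have hPb : Polynomial.aeval (a : Unitization ℂ A) P = 0 := by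
    rw [hP, map_sum]
    have h1 : ∀ i : Fin (n+1), Polynomial.aeval (a : Unitization ℂ A)
        (Polynomial.monomial ((i : ℕ)+1) (g i))
        = (Unitization.inrNonUnitalAlgHom ℂ A) (g i • npow a (i : ℕ)) := by
      intro i
      rw [Polynomial.aeval_monomial, map_smul, Algebra.smul_def]
      congr 1
      exact (npow_inr a i).symm
    simp_rw [h1]
    rw [← map_sum, hsumA, map_zero]
  have hPne : P ≠ 0 := by
    intro h
    apply hi₀
    have : P.coeff ((i₀ : ℕ) + 1) = g i₀ := by
      rw [hP]
      rw [Polynomial.finset_sum_coeff]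
      rw [Finset.sum_eq_single i₀]
      · simp
      · intro j _ hj
        rw [Polynomial.coeff_monomial]
        rw [if_neg]
        intro hc
        exact hj (Fin.ext (by omega))
      · simp
    rw [h] at this
    simpa using this.symm
  have hspec : spectrum ℂ (a : Unitization ℂ A) ⊆ {z | P.IsRoot z} := by
    intro z hz
    have := spectrum.subset_polynomial_aeval (a : Unitization ℂ A) P ⟨z, hz, rfl⟩
    rw [hPb] at this
    rw [spectrum.zero_eq] at this
    simpa [Polynomial.IsRoot] using this
  have hfinC : (spectrum ℂ (a : Unitization ℂ A)).Finite :=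
    Set.Finite.subset (Polynomial.finite_setOf_isRoot hPne) hspec
  rw [Unitization.quasispectrum_eq_spectrum_inr' ℝ ℂ a]
  rw [← spectrum.preimage_algebraMap ℂ]
  exact hfinC.preimage ((FaithfulSMul.algebraMap_injective ℝ ℂ).injOn)

lemma continuousOn_of_finite {s : Set ℝ} (hs : s.Finite) (f : ℝ → ℝ) : ContinuousOn f s := by
  rw [continuousOn_iff_continuous_restrict]
  haveI := hs.to_subtype
  exact continuous_of_discreteTopology

lemma cfc_npow (a : A) (ha : IsSelfAdjoint a) (k : ℕ) :
    cfcₙ (fun t : ℝ => t ^ (k+1)) a = npow a k := by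
  induction k with
  | zero =>
    have : (fun t : ℝ => t ^ 1) = fun t : ℝ => t := by funext t; rw [pow_one]
    rw [this, cfcₙ_id' ℝ a]; rfl
  | succ k ih =>
    have h1 : (fun t : ℝ => t ^ (k+2)) = fun t : ℝ => t ^ (k+1) * t := by
      funext t; rw [pow_succ]
    rw [h1, cfcₙ_mul _ _ a, ih, cfcₙ_id' ℝ a]; rfl

lemma cfc_polyeval_mem (M : Submodule ℂ A) (hmul : ∀ x ∈ M, ∀ y ∈ M, x * y ∈ M)
    (a : A) (ha : a ∈ M) (hsa : IsSelfAdjoint a) (P : ℝ[X]) (hP0 : P.coeff 0 = 0) :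
    cfcₙ (fun t => P.eval t) a ∈ M := by
  have hpow : ∀ k, npow a k ∈ M := by
    intro k; induction k with
    | zero => exact ha
    | succ k ih => exact hmul _ ih _ ha
  set g : ℕ → ℝ → ℝ := fun k => Nat.casesOn k (fun _ => (0:ℝ)) (fun k t => P.coeff (k+1) * t^(k+1))
    with hg
  have hgc : ∀ k, ContinuousOn (g k) (quasispectrum ℝ a) := by
    intro k
    cases k with
    | zero => exact continuousOn_const
    | succ k => exact (Continuous.continuousOn (by fun_prop))
  have hg0 : ∀ k, g k 0 = 0 := by
    intro k; cases k with
    | zero => rfl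
    | succ k => simp [hg]
  have heval : (fun t => P.eval t) = ∑ k ∈ Finset.range (P.natDegree + 1), g k := by
    funext t
    rw [Polynomial.eval_eq_sum_range, Finset.sum_apply]
    refine Finset.sum_congr rfl fun k hk => ?_
    cases k with
    | zero => simp [hg, hP0]
    | succ k => rfl
  rw [heval, cfcₙ_sum g a _ (fun k _ => hgc k) (fun k _ => hg0 k)]
  refine Submodule.sum_mem M fun k _ => ?_
  cases k with
  | zero =>
    have : g 0 = (0 : ℝ → ℝ) := rfl
    rw [this, cfcₙ_zero]; exact M.zero_mem
  | succ k =>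
    have : cfcₙ (g (k+1)) a = P.coeff (k+1) • cfcₙ (fun t : ℝ => t^(k+1)) a :=
      cfcₙ_const_mul (P.coeff (k+1)) (fun t : ℝ => t^(k+1)) a
    rw [this, cfc_npow a hsa k]
    exact M.smul_of_tower_mem _ (hpow k)

lemma conj_expand (u x : A) (hu : star u = u) :
    star (x - x * u) * (x - x * u) =
      (star x * x) - (star x * x) * u - u * (star x * x) + u * ((star x * x) * u) := by
  rw [star_sub, star_mul, hu]
  noncomm_ring


lemma exists_unit (M : Submodule ℂ A) [FiniteDimensional ℂ M]
    (hmul : ∀ x ∈ M, ∀ y ∈ M, x * y ∈ M) (hstar : ∀ x ∈ M, star x ∈ M) :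
    ∃ u ∈ M, star u = u ∧ u * u = u ∧ ∀ m ∈ M, u * m = m ∧ m * u = m := by
  classical
  set n := Module.finrank ℂ M with hn
  let b : Module.Basis (Fin n) ℂ M := Module.finBasis ℂ M
  set v : Fin n → A := fun i => (b i : A) with hv
  have hvM : ∀ i, v i ∈ M := fun i => (b i).2
  set w : Fin n → A := fun i => star (v i) * v i + v i * star (v i) with hw
  have hwM : ∀ i, w i ∈ M := fun i =>
    M.add_mem (hmul _ (hstar _ (hvM i)) _ (hvM i)) (hmul _ (hvM i) _ (hstar _ (hvM i)))
  set a : A := ∑ i, w i with ha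
  have haM : a ∈ M := Submodule.sum_mem M fun i _ => hwM i
  have hsa : IsSelfAdjoint a := by
    rw [IsSelfAdjoint, ha, star_sum]
    refine Finset.sum_congr rfl fun i _ => ?_
    simp [hw, star_add, star_mul]
  have hfin : (quasispectrum ℝ a).Finite := finite_quasispectrum M hmul a haM
  set f : ℝ → ℝ := fun t => if t = 0 then 0 else 1 with hf
  have hf0 : f 0 = 0 := by simp [hf]
  have hfc : ContinuousOn f (quasispectrum ℝ a) := continuousOn_of_finite hfin f
  set u : A := cfcₙ f a with hu
  have hu_sa : IsSelfAdjoint u := cfcₙ_predicate f a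
  have hu_star : star u = u := hu_sa
  have hff : (fun t => f t * f t) = f := by
    funext t; by_cases h : t = 0 <;> simp [hf, h]
  have hu_idem : u * u = u := by
    rw [hu, ← cfcₙ_mul f f a hfc hf0 hfc hf0, hff]
  have hid : (fun t : ℝ => t * f t) = fun t : ℝ => t := by
    funext t; by_cases h : t = 0 <;> simp [hf, h]
  have hau : a * u = a := by
    have h3 := cfcₙ_mul (fun t : ℝ => t) f a (continuousOn_id) rfl hfc hf0
    rw [hid, cfcₙ_id' ℝ a] at h3
    exact h3.symm
  have hua : u * a = a := by
    have hid2 : (fun t : ℝ => f t * t) = fun t : ℝ => t := by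
      funext t; by_cases h : t = 0 <;> simp [hf, h]
    have h3 := cfcₙ_mul f (fun t : ℝ => t) a hfc hf0 (continuousOn_id) rfl
    rw [hid2, cfcₙ_id' ℝ a] at h3
    exact h3.symm
  -- u ∈ M via interpolation
  have huM : u ∈ M := by
    set s : Finset ℝ := hfin.toFinset with hs
    have h0s : (0:ℝ) ∈ s := by
      rw [hs, Set.Finite.mem_toFinset]
      exact quasispectrum.zero_mem ℝ a
    set P : ℝ[X] := Lagrange.interpolate s id f with hP
    have hPf : (quasispectrum ℝ a).EqOn f (fun t => P.eval t) := by
      intro t ht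
      exact (Lagrange.eval_interpolate_at_node f (Set.injOn_id _) (by
        rw [hs, Set.Finite.mem_toFinset]; exact ht)).symm
    have hP0 : P.coeff 0 = 0 := by
      rw [Polynomial.coeff_zero_eq_eval_zero]
      have := Lagrange.eval_interpolate_at_node f (Set.injOn_id _) h0s
      exact this.trans hf0
    rw [hu, cfcₙ_congr hPf]
    exact cfc_polyeval_mem M hmul a haM hsa P hP0
  -- basis annihilation
  set c : Fin n → A := fun i => v i - v i * u with hc
  set d : Fin n → A := fun i => star (v i) - star (v i) * u with hd
  have hterm : ∀ i, star (c i) * c i + star (d i) * d i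
      = w i - w i * u - u * w i + u * (w i * u) := by
    intro i
    rw [hc, hd]
    simp only
    rw [conj_expand u (v i) hu_star, conj_expand u (star (v i)) hu_star, star_star, hw]
    simp only
    noncomm_ring
  have hsum0 : ∑ i, (star (c i) * c i + star (d i) * d i) = 0 := by
    calc ∑ i, (star (c i) * c i + star (d i) * d i)
        = ∑ i, (w i - w i * u - u * w i + u * (w i * u)) :=
          Finset.sum_congr rfl fun i _ => hterm i
      _ = a - a * u - u * a + u * (a * u) := by
          rw [ha]
          simp only [Finset.sum_add_distrib, Finset.sum_sub_distrib,
            ← Finset.sum_mul, ← Finset.mul_sum]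
      _ = 0 := by rw [hau, hua]; abel
  have hzero : ∀ i, c i = 0 ∧ d i = 0 := by
    letI := CStarAlgebra.spectralOrder (Unitization ℂ A)
    letI := CStarAlgebra.spectralOrderedRing (Unitization ℂ A)
    set φ : A →⋆ₙₐ[ℂ] Unitization ℂ A := Unitization.inrNonUnitalStarAlgHom ℂ A with hφ
    have hφsum : ∑ i, (star (φ (c i)) * φ (c i) + star (φ (d i)) * φ (d i)) = 0 := by
      have := congrArg φ hsum0
      rw [map_sum, map_zero] at this
      simpa [map_add, map_mul, map_star] using this
    have hnn : ∀ i ∈ Finset.univ (α := Fin n),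
        (0:Unitization ℂ A) ≤ star (φ (c i)) * φ (c i) + star (φ (d i)) * φ (d i) :=
      fun i _ => add_nonneg (star_mul_self_nonneg _) (star_mul_self_nonneg _)
    have heach := (Finset.sum_eq_zero_iff_of_nonneg hnn).mp hφsum
    intro i
    have h2 := (add_eq_zero_iff_of_nonneg (star_mul_self_nonneg _)
      (star_mul_self_nonneg _)).mp (heach i (Finset.mem_univ i))
    constructor
    · apply Unitization.inr_injective (R := ℂ)
      have := h2.1; rw [CStarRing.star_mul_self_eq_zero_iff] at this
      simpa [hφ] using this
    · apply Unitization.inr_injective (R := ℂ)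
      have := h2.2; rw [CStarRing.star_mul_self_eq_zero_iff] at this
      simpa [hφ] using this
  have hvu : ∀ i, v i * u = v i := fun i => by
    have := (hzero i).1; rw [hc] at this; simp only at this
    linear_combination (norm := noncomm_ring) -this
  have huv : ∀ i, u * v i = v i := fun i => by
    have := (hzero i).2; rw [hd] at this; simp only at this
    have h2 : star (v i) * u = star (v i) := by linear_combination (norm := noncomm_ring) -this
    have := congrArg star h2
    rwa [star_mul, hu_star, star_star] at this
  refine ⟨u, huM, hu_star, hu_idem, fun m hm => ?_⟩
  have hrepr : (⟨m, hm⟩ : M) = ∑ i, (b.repr ⟨m, hm⟩) i • b i := (b.sum_repr ⟨m, hm⟩).symm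
  have hmA : m = ∑ i, (b.repr ⟨m, hm⟩) i • v i := by
    have := congrArg (Subtype.val) hrepr
    simpa only [hv, Submodule.coe_sum, Submodule.coe_smul] using this
  constructor
  · rw [hmA, Finset.mul_sum]
    refine Finset.sum_congr rfl fun i _ => ?_
    rw [mul_smul_comm, huv i]
  · rw [hmA, Finset.sum_mul]
    refine Finset.sum_congr rfl fun i _ => ?_
    rw [smul_mul_assoc, hvu i]



lemma exists_ideal_unit_s7 (Ad : Set A) (J : Set A) (hJ : IsStarIdealOf Ad J)
    (M : Submodule ℂ A) [FiniteDimensional ℂ M] (hMAd : (M : Set A) ⊆ Ad)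
    (hmul : ∀ x ∈ M, ∀ y ∈ M, x * y ∈ M) (hstar : ∀ x ∈ M, star x ∈ M) :
    ∃ e, e ∈ J ∧ e ∈ M ∧ star e = e ∧ e * e = e ∧
      (∀ z, z ∈ J → z ∈ M → e * z = z ∧ z * e = z) ∧ (∀ m ∈ M, e * m = m * e) := by
  obtain ⟨u, huM, hust, huid, hunit⟩ := exists_unit M hmul hstar
  let I : Submodule ℂ A :=
    { carrier := J ∩ (M : Set A)
      add_mem' := fun {x y} hx hy =>
        ⟨hJ.2.2.1 x hx.1 y hy.1, M.add_mem hx.2 hy.2⟩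
      zero_mem' := ⟨hJ.2.1, M.zero_mem⟩
      smul_mem' := by
        rintro c z ⟨hzJ, hzM⟩
        have h1 : c • u ∈ M := M.smul_mem c huM
        have h2 : (c • u) * z ∈ J := (hJ.2.2.2.2.1 _ (hMAd h1) z hzJ).1
        have h3 : (c • u) * z = c • z := by
          rw [smul_mul_assoc, (hunit z hzM).1]
        exact ⟨h3 ▸ h2, M.smul_mem c hzM⟩ }
  have hIM : I ≤ M := fun z hz => hz.2
  haveI : FiniteDimensional ℂ I := Submodule.finiteDimensional_of_le hIM
  have hImul : ∀ x ∈ I, ∀ y ∈ I, x * y ∈ I := by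
    rintro x ⟨hxJ, hxM⟩ y ⟨hyJ, hyM⟩
    exact ⟨(hJ.2.2.2.2.1 x (hJ.1 hxJ) y hyJ).1, hmul x hxM y hyM⟩
  have hIstar : ∀ x ∈ I, star x ∈ I := by
    rintro x ⟨hxJ, hxM⟩
    exact ⟨hJ.2.2.2.2.2 x hxJ, hstar x hxM⟩
  obtain ⟨e, heI, hest, heid, heunit⟩ := exists_unit I hImul hIstar
  have heJ : e ∈ J := heI.1
  have heM : e ∈ M := heI.2
  refine ⟨e, heJ, heM, hest, heid, fun z hzJ hzM => heunit z ⟨hzJ, hzM⟩, fun m hm => ?_⟩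
  have hemI : e * m ∈ I := ⟨(hJ.2.2.2.2.1 m (hMAd hm) e heJ).2, hmul e heM m hm⟩
  have hmeI : m * e ∈ I := ⟨(hJ.2.2.2.2.1 m (hMAd hm) e heJ).1, hmul m hm e heM⟩
  have h1 : (e * m) * e = e * m := (heunit _ hemI).2
  have h2 : e * (m * e) = m * e := (heunit _ hmeI).1
  rw [← mul_assoc] at h2
  rw [← h1, h2]



lemma idem_norm (p : A) (hst : star p = p) (hid : p * p = p) : ‖p‖ = 0 ∨ ‖p‖ = 1 := by
  have h1 : ‖p‖ * ‖p‖ = ‖p‖ := by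
    calc ‖p‖ * ‖p‖ = ‖star p * p‖ := (CStarRing.norm_star_mul_self).symm
    _ = ‖p‖ := by rw [hst, hid]
  rcases eq_or_ne ‖p‖ 0 with h | h
  · exact Or.inl h
  · right
    have h2 : ‖p‖ * ‖p‖ = ‖p‖ * 1 := by rw [h1, mul_one]
    exact mul_left_cancel₀ h h2

lemma step_false (Ad : Set A) (hAd : IsLocallyMatricialDense Ad) (J₁ J₂ : Set A)
    (h₁ : IsStarIdealOf Ad J₁) (h₂ : IsStarIdealOf Ad J₂)
    (hcl : closure J₁ = closure J₂) {x : A} (hx₂ : x ∈ J₂) (hx₁ : x ∉ J₁) : False := by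
  classical
  obtain ⟨hsub, hdense, hloc⟩ := hAd
  have hxAd : x ∈ Ad := h₂.1 hx₂
  obtain ⟨M, hMAd, hsM, hMmul, hMstar, hMfd⟩ := hloc {x} (by simpa using hxAd)
  haveI := hMfd
  have hxM : x ∈ M := hsM (by simp)
  obtain ⟨q, hqJ₂, hqM, hqst, hqid, hqunit, _⟩ :=
    exists_ideal_unit_s7 Ad J₂ h₂ M hMAd hMmul hMstar
  have hxq : x * q = x := (hqunit x hx₂ hxM).2
  have hqJ₁ : q ∉ J₁ := fun hq =>
    hx₁ (by rw [← hxq]; exact (h₁.2.2.2.2.1 x hxAd q hq).1)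
  have hq0 : q ≠ 0 := fun h => hqJ₁ (h ▸ h₁.2.1)
  have hqcl : q ∈ closure J₁ := hcl ▸ subset_closure hqJ₂
  rw [Metric.mem_closure_iff] at hqcl
  obtain ⟨y, hyJ₁, hdy⟩ := hqcl (1/3) (by norm_num)
  have hyAd : y ∈ Ad := h₁.1 hyJ₁
  have hqAd : q ∈ Ad := h₂.1 hqJ₂
  obtain ⟨N, hNAd, hsN, hNmul, hNstar, hNfd⟩ := hloc {q, y} (by
    intro z hz
    simp only [Finset.coe_insert, Finset.coe_singleton, Set.mem_insert_iff,
      Set.mem_singleton_iff] at hz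
    rcases hz with rfl | rfl
    · exact hqAd
    · exact hyAd)
  haveI := hNfd
  have hqN : q ∈ N := hsN (by simp)
  have hyN : y ∈ N := hsN (by simp)
  obtain ⟨e, heJ₁, heN, hest, heid, heunit, hecomm⟩ :=
    exists_ideal_unit_s7 Ad J₁ h₁ N hNAd hNmul hNstar
  have hye : y * e = y := (heunit y hyJ₁ hyN).2
  have hcom : e * q = q * e := hecomm q hqN
  set r : A := q - q * e with hr
  have hrst : star r = r := by
    rw [hr, star_sub, star_mul, hest, hqst, ← hcom]
  have hrid : r * r = r := by
    have h1 : q * e * q = q * q * e := by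
      rw [mul_assoc, hcom, ← mul_assoc]
    have h2 : q * e * (q * e) = q * e := by
      rw [← mul_assoc, h1, hqid, mul_assoc, heid]
    rw [hr]
    calc (q - q * e) * (q - q * e)
        = q * q - q * (q * e) - q * e * q + q * e * (q * e) := by noncomm_ring
      _ = q - q * e := by
          rw [hqid, ← mul_assoc, hqid, h1, hqid, h2]; abel
  have henorm : ‖e‖ ≤ 1 := by
    rcases idem_norm e hest heid with h | h <;> rw [h] <;> norm_num
  have hrnorm : ‖r‖ < 1 := by
    have hre : r = (q - y) + (y - q) * e := by
      rw [hr, sub_mul, hye]; abel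
    have h1 : ‖r‖ ≤ ‖q - y‖ + ‖(y - q) * e‖ := hre ▸ norm_add_le _ _
    have h2 : ‖(y - q) * e‖ ≤ ‖y - q‖ * ‖e‖ := norm_mul_le _ _
    have h3 : ‖q - y‖ < 1/3 := by rwa [dist_eq_norm] at hdy
    have h4 : ‖y - q‖ < 1/3 := by rwa [norm_sub_rev]
    nlinarith [norm_nonneg (y - q), norm_nonneg e]
  have hr0 : r = 0 := by
    rcases idem_norm r hrst hrid with h | h
    · exact norm_eq_zero.mp h
    · rw [h] at hrnorm; norm_num at hrnorm
  have hqe : q = q * e := by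
    have := sub_eq_zero.mp (hr.symm ▸ hr0)
    exact this
  exact hqJ₁ (hqe ▸ (h₁.2.2.2.2.1 q hqAd e heJ₁).1)

end AFProofAux

/-- Distinct self-adjoint two-sided ideals of a dense locally matricial *-subalgebra of an
AF-algebra have distinct closures. -/
theorem af_closure_injective {A : Type*} [NonUnitalCStarAlgebra A] (Ad : Set A)
    (hAd : IsLocallyMatricialDense Ad)
    (J₁ J₂ : Set A) (h₁ : IsStarIdealOf Ad J₁) (h₂ : IsStarIdealOf Ad J₂)
    (hne : J₁ ≠ J₂) :
    closure J₁ ≠ closure J₂ := by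
  intro hcl
  have key : ∃ x, (x ∈ J₁ ∧ x ∉ J₂) ∨ (x ∈ J₂ ∧ x ∉ J₁) := by
    by_contra h
    apply hne
    ext z
    constructor
    · intro hz; by_contra hz2; exact h ⟨z, Or.inl ⟨hz, hz2⟩⟩
    · intro hz; by_contra hz2; exact h ⟨z, Or.inr ⟨hz, hz2⟩⟩
  obtain ⟨x, hx⟩ := key
  rcases hx with ⟨ha, hb⟩ | ⟨ha, hb⟩
  · exact step_false Ad hAd J₂ J₁ h₂ h₁ hcl.symm ha hb
  · exact step_false Ad hAd J₁ J₂ h₁ h₂ hcl ha hb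
end

section
/- In an AF-algebra Ā with dense locally matricial *-subalgebra A: for every closed two-sided ideal D of Ā, D equals the closure of D ∩ A. -/
namespace AFBratteli
set_option maxHeartbeats 1000000

variable {A : Type*} [NonUnitalCStarAlgebra A]

/-- Non-unital powers: `npw h k = h ^ (k+1)`. -/
def npw (h : A) : ℕ → A
  | 0 => h
  | (k+1) => h * npw h k

lemma npw_comm (h : A) (k : ℕ) : h * npw h k = npw h k * h := by
  induction k with
  | zero => rfl
  | succ k ih =>
    calc h * npw h (k+1) = h * (h * npw h k) := rfl
      _ = h * (npw h k * h) := by rw [ih]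
      _ = (h * npw h k) * h := (mul_assoc _ _ _).symm
      _ = npw h (k+1) * h := rfl

lemma star_npw {h : A} (hh : IsSelfAdjoint h) (k : ℕ) : star (npw h k) = npw h k := by
  induction k with
  | zero => exact hh
  | succ k ih => show star (h * npw h k) = h * npw h k
                 rw [star_mul, ih, hh.star_eq, ← npw_comm]

lemma cfcₙ_pow {h : A} (hh : IsSelfAdjoint h) (k : ℕ) :
    cfcₙ (fun t : ℝ => t ^ (k+1)) h = npw h k := by
  induction k with
  | zero => simpa [npw] using cfcₙ_id' ℝ h
  | succ k ih =>
    have : (fun t : ℝ => t ^ (k+2)) = fun t : ℝ => t * t ^ (k+1) := by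
      ext t; ring
    rw [this, cfcₙ_mul (fun t : ℝ => t) (fun t => t ^ (k+1)) h, cfcₙ_id' ℝ h, ih]
    rfl

/-- polynomial function with zero constant term -/
def pfun (c : ℕ → ℝ) (n : ℕ) : ℝ → ℝ := fun t => ∑ k ∈ Finset.range n, c k * t ^ (k+1)

/-- corresponding element of the algebra -/
noncomputable def pelem (c : ℕ → ℝ) (n : ℕ) (h : A) : A := ∑ k ∈ Finset.range n, c k • npw h k

lemma pfun_cont (c : ℕ → ℝ) (n : ℕ) : Continuous (pfun c n) := by
  unfold pfun; fun_prop

lemma pfun_zero (c : ℕ → ℝ) (n : ℕ) : pfun c n 0 = 0 := by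
  unfold pfun; simp

lemma cfcₙ_pfun {h : A} (hh : IsSelfAdjoint h) (c : ℕ → ℝ) (n : ℕ) :
    cfcₙ (pfun c n) h = pelem c n h := by
  unfold pfun pelem
  rw [show (fun t => ∑ k ∈ Finset.range n, c k * t ^ (k+1)) =
      ∑ k ∈ Finset.range n, (fun t : ℝ => c k * t ^ (k+1)) from by ext t; simp]
  rw [cfcₙ_sum _ h _ (fun i _ => by fun_prop) (fun i _ => by simp)]
  refine Finset.sum_congr rfl fun k _ => ?_
  rw [cfcₙ_const_mul (c k) (fun t : ℝ => t ^ (k+1)) h, cfcₙ_pow hh]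

lemma star_pelem {h : A} (hh : IsSelfAdjoint h) (c : ℕ → ℝ) (n : ℕ) :
    star (pelem c n h) = pelem c n h := by
  unfold pelem
  rw [star_sum]
  exact Finset.sum_congr rfl fun k _ => by rw [star_smul, star_npw hh, star_trivial]

lemma npw_mem {M : Submodule ℂ A} (hmul : ∀ x ∈ M, ∀ y ∈ M, x * y ∈ M) {h : A}
    (hM : h ∈ M) (k : ℕ) : npw h k ∈ M := by
  induction k with
  | zero => exact hM
  | succ k ih => exact hmul h hM _ ih

lemma pelem_mem {M : Submodule ℂ A} (hmul : ∀ x ∈ M, ∀ y ∈ M, x * y ∈ M) {h : A}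
    (hM : h ∈ M) (c : ℕ → ℝ) (n : ℕ) : pelem c n h ∈ M := by
  refine Submodule.sum_mem M fun k _ => ?_
  have : c k • npw h k = (c k : ℂ) • npw h k := by norm_num
  rw [this]
  exact Submodule.smul_mem M _ (npw_mem hmul hM k)

lemma mul_npw_eq_zero {e h : A} (he : e * h = 0) (k : ℕ) : e * npw h k = 0 := by
  induction k with
  | zero => exact he
  | succ k ih => show e * (h * npw h k) = 0
                 rw [← mul_assoc, he, zero_mul]

lemma mul_pelem_eq_zero {e h : A} (he : e * h = 0) (c : ℕ → ℝ) (n : ℕ) :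
    e * pelem c n h = 0 := by
  unfold pelem
  rw [Finset.mul_sum]
  exact Finset.sum_eq_zero fun k _ => by rw [mul_smul_comm, mul_npw_eq_zero he, smul_zero]


lemma eq_zero_of_sum_mul_star {ι : Type*} (s : Finset ι) (c : ι → A)
    (hsum : ∑ j ∈ s, c j * star (c j) = 0) : ∀ i ∈ s, c i = 0 := by
  intro i hi
  letI : PartialOrder (Unitization ℂ A) := CStarAlgebra.spectralOrder _
  haveI : StarOrderedRing (Unitization ℂ A) := CStarAlgebra.spectralOrderedRing _
  set f : A →⋆ₙₐ[ℂ] Unitization ℂ A := Unitization.inrNonUnitalStarAlgHom ℂ A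
  have hsum' : ∑ j ∈ s, f (c j) * star (f (c j)) = 0 := by
    rw [← map_zero f, ← hsum, map_sum]
    exact Finset.sum_congr rfl fun j _ => by rw [map_mul, map_star]
  have hnn : ∀ j ∈ s, (0 : Unitization ℂ A) ≤ f (c j) * star (f (c j)) := by
    intro j _
    simpa using star_mul_self_nonneg (star (f (c j)))
  have h0 : f (c i) * star (f (c i)) = 0 :=
    le_antisymm (hsum' ▸ Finset.single_le_sum hnn hi) (hnn i hi)
  have hnorm : ‖f (c i)‖ * ‖f (c i)‖ = 0 := by
    rw [← CStarRing.norm_self_mul_star, h0, norm_zero]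
  have : ‖c i‖ = 0 := by
    rw [← Unitization.norm_inr (𝕜 := ℂ) (c i)]
    exact mul_self_eq_zero.mp hnorm
  simpa using this

lemma idem_mem {D : Set A} (hD : IsTwoSidedIdealSet D) {r c : A}
    (hidem : r * r = r) (hc : c ∈ D) (hrc : r * c = c) (hcr : c * r = c)
    (hnorm : ‖r - c‖ < 1) : r ∈ D := by
  set t : A := r - c with ht
  have hrt : r * t = t := by rw [ht, mul_sub, hidem, hrc]
  have htr : t * r = t := by rw [ht, sub_mul, hidem, hcr]
  have htn : ∀ k, ‖npw t k‖ ≤ ‖t‖ ^ (k+1) := by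
    intro k
    induction k with
    | zero => simp [npw]
    | succ k ih =>
      calc ‖t * npw t k‖ ≤ ‖t‖ * ‖npw t k‖ := norm_mul_le _ _
        _ ≤ ‖t‖ * ‖t‖ ^ (k+1) := mul_le_mul_of_nonneg_left ih (norm_nonneg t)
        _ = ‖t‖ ^ (k+2) := by ring
  have hsummable : Summable (fun k => npw t k) := by
    refine Summable.of_norm_bounded (g := fun k => ‖t‖ ^ (k+1)) ?_ htn
    exact (summable_geometric_of_lt_one (norm_nonneg t) hnorm).comp_injective
      (add_left_injective 1)
  set y : A := ∑' k, npw t k with hy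
  have hry : r * y = y := by
    rw [hy, ← Summable.tsum_mul_left r hsummable]
    refine tsum_congr fun k => ?_
    induction k with
    | zero => exact hrt
    | succ k ih => show r * (t * npw t k) = _
                   rw [← mul_assoc, hrt]
                   rfl
  have hty : t * y = y - t := by
    rw [hy, ← Summable.tsum_mul_left t hsummable]
    have hshift : ∀ k, t * npw t k = npw t (k+1) := fun k => rfl
    rw [tsum_congr hshift, Summable.tsum_eq_zero_add hsummable]
    have h0 : npw t 0 = t := rfl
    rw [h0]
    abel
  have key : c * (r + y) = r := by
    have hc' : c = r - t := (sub_sub_cancel r c).symm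
    rw [hc', sub_mul, mul_add, mul_add, hidem, hry, htr, hty]
    abel
  rw [← key]
  exact hD.2.2.2.2 (r + y) c hc

lemma smul_mem_of_closed {D : Set A} (hD : IsTwoSidedIdealSet D) (hDc : IsClosed D)
    (z : ℂ) {d : A} (hd : d ∈ D) : z • d ∈ D := by
  have C : ∀ η : ℝ, 0 < η → ∃ w : A, ‖d - d * w‖ ≤ η := by
    intro η hη
    set h : A := star d * d with hh
    have hsa : IsSelfAdjoint h := IsSelfAdjoint.star_mul_self d
    set ν : ℝ := η ^ 4 with hν
    have hν0 : 0 < ν := by positivity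
    set g : ℝ → ℝ := fun t => t ^ 2 / (t ^ 2 + ν) with hg
    have hdenom : ∀ t : ℝ, t ^ 2 + ν ≠ 0 := fun t => by positivity
    have hgc : Continuous g := by
      exact Continuous.div (by fun_prop) (by fun_prop) hdenom
    have hgcOn : ContinuousOn g (quasispectrum ℝ h) := hgc.continuousOn
    have hg0 : g 0 = 0 := by simp [hg]
    set w : A := cfcₙ g h with hw
    refine ⟨w, ?_⟩
    have hwsa : IsSelfAdjoint w := cfcₙ_predicate g h
    -- the product identity
    have hxx : star (d - d * w) * (d - d * w) = h - h * w - w * h + w * (h * w) := by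
      rw [star_sub, star_mul, hwsa.star_eq, hh]
      rw [sub_mul, mul_sub, mul_sub, mul_assoc w (star d) (d * w),
        ← mul_assoc (star d) d w, mul_assoc w (star d) d]
      abel
    -- identify with cfcₙ of one function
    have m1 : cfcₙ (fun t => t * g t) h = h * w := by
      rw [cfcₙ_mul (fun t : ℝ => t) g h (by fun_prop) (by simp) hgcOn hg0, cfcₙ_id' ℝ h]
    have m2 : cfcₙ (fun t => g t * t) h = w * h := by
      rw [cfcₙ_mul g (fun t : ℝ => t) h hgcOn hg0 (by fun_prop) (by simp), cfcₙ_id' ℝ h]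
    have m3 : cfcₙ (fun t => g t * (t * g t)) h = w * (h * w) := by
      rw [cfcₙ_mul g (fun t => t * g t) h hgcOn hg0
        (by exact (continuous_id.mul hgc).continuousOn) (by simp [hg0]), m1]
    have m0 : cfcₙ (fun t : ℝ => t) h = h := cfcₙ_id' ℝ h
    have hsub1 : cfcₙ (fun t : ℝ => t - t * g t) h = h - h * w := by
      rw [cfcₙ_sub (fun t : ℝ => t) (fun t => t * g t) h (by fun_prop) (by simp)
        (by exact (continuous_id.mul hgc).continuousOn) (by simp [hg0]), m0, m1]
    have hsub2 : cfcₙ (fun t : ℝ => t - t * g t - g t * t) h = h - h * w - w * h := by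
      rw [cfcₙ_sub (fun t : ℝ => t - t * g t) (fun t => g t * t) h
        (by exact (continuous_id.sub (continuous_id.mul hgc)).continuousOn)
        (by simp [hg0])
        (by exact (hgc.mul continuous_id).continuousOn) (by simp [hg0]), hsub1, m2]
    have hadd : cfcₙ (fun t : ℝ => t - t * g t - g t * t + g t * (t * g t)) h
        = h - h * w - w * h + w * (h * w) := by
      rw [cfcₙ_add (fun t : ℝ => t - t * g t - g t * t) (fun t => g t * (t * g t)) h
        (by exact (continuous_id.sub (continuous_id.mul hgc) |>.sub
          (hgc.mul continuous_id)).continuousOn)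
        (by simp [hg0])
        (by exact (hgc.mul (continuous_id.mul hgc)).continuousOn)
        (by simp [hg0]), hsub2, m3]
    -- the numeric bound
    have hbound : ∀ t : ℝ, |t - t * g t - g t * t + g t * (t * g t)| ≤ Real.sqrt ν / 2 := by
      intro t
      have hF : t - t * g t - g t * t + g t * (t * g t) = t * (ν / (t ^ 2 + ν)) ^ 2 := by
        rw [hg]
        field_simp
        ring
      rw [hF]
      set sq := Real.sqrt ν with hsq
      have hsq0 : 0 ≤ sq := Real.sqrt_nonneg ν
      have hsq2 : sq ^ 2 = ν := Real.sq_sqrt hν0.le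
      have hkey : 2 * |t| * sq ≤ t ^ 2 + ν := by
        nlinarith [sq_nonneg (|t| - sq), sq_abs t]
      have hpos : 0 < t ^ 2 + ν := by positivity
      rw [abs_mul, abs_of_nonneg (by positivity : (0:ℝ) ≤ (ν / (t ^ 2 + ν)) ^ 2), div_pow]
      rw [show |t| * (ν ^ 2 / (t ^ 2 + ν) ^ 2) = |t| * ν ^ 2 / (t ^ 2 + ν) ^ 2 from by ring]
      rw [div_le_div_iff₀ (by positivity) (by norm_num : (0:ℝ) < 2)]
      have h1 : (2 * |t| * sq) * (sq * (t ^ 2 + ν)) ≤ ((t ^ 2 + ν)) * (sq * (t ^ 2 + ν)) :=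
        mul_le_mul_of_nonneg_right hkey (by positivity)
      have h2 : (2 * |t| * ν) * ν ≤ (2 * |t| * ν) * (t ^ 2 + ν) := by
        have : ν ≤ t ^ 2 + ν := by nlinarith [sq_nonneg t]
        exact mul_le_mul_of_nonneg_left this (by positivity)
      calc |t| * ν ^ 2 * 2 = (2 * |t| * ν) * ν := by ring
        _ ≤ (2 * |t| * ν) * (t ^ 2 + ν) := h2
        _ = (2 * |t| * sq) * (sq * (t ^ 2 + ν)) := by rw [← hsq2]; ring
        _ ≤ ((t ^ 2 + ν)) * (sq * (t ^ 2 + ν)) := h1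
        _ = sq * (t ^ 2 + ν) ^ 2 := by ring
    -- put it together
    have hsqν : Real.sqrt ν = η ^ 2 := by
      rw [hν, show η ^ 4 = (η ^ 2) ^ 2 by ring, Real.sqrt_sq (by positivity)]
    have hn2 : ‖d - d * w‖ * ‖d - d * w‖ ≤ η ^ 2 / 2 := by
      calc ‖d - d * w‖ * ‖d - d * w‖ = ‖star (d - d * w) * (d - d * w)‖ :=
            (CStarRing.norm_star_mul_self).symm
        _ = ‖cfcₙ (fun t : ℝ => t - t * g t - g t * t + g t * (t * g t)) h‖ := by
            rw [hxx, ← hadd]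
        _ ≤ Real.sqrt ν / 2 := norm_cfcₙ_le (fun t _ => by
            rw [Real.norm_eq_abs]; exact hbound t)
        _ = η ^ 2 / 2 := by rw [hsqν]
    have h' : ‖d - d * w‖ ^ 2 ≤ η ^ 2 := by nlinarith [hn2, sq_nonneg η]
    exact (pow_le_pow_iff_left₀ (norm_nonneg _) hη.le (by norm_num)).mp h'
  have hmem : z • d ∈ closure D := by
    rw [Metric.mem_closure_iff]
    intro δ hδ
    obtain ⟨w, hwb⟩ := C (δ / (2 * (‖z‖ + 1))) (by positivity)
    refine ⟨d * (z • w), hD.2.2.2.2 (z • w) d hd, ?_⟩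
    rw [dist_eq_norm]
    have hid : z • d - d * (z • w) = z • (d - d * w) := by
      rw [mul_smul_comm, smul_sub]
    rw [hid, norm_smul]
    have h1 : ‖z‖ / (2 * (‖z‖ + 1)) < 1 := by
      rw [div_lt_one (by positivity)]; nlinarith [norm_nonneg z]
    calc ‖z‖ * ‖d - d * w‖ ≤ ‖z‖ * (δ / (2 * (‖z‖ + 1))) :=
          mul_le_mul_of_nonneg_left hwb (norm_nonneg z)
      _ = (‖z‖ / (2 * (‖z‖ + 1))) * δ := by ring
      _ < 1 * δ := mul_lt_mul_of_pos_right h1 hδ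
      _ = δ := one_mul δ
  rwa [hDc.closure_eq] at hmem


lemma quasi_finite {M : Submodule ℂ A} [FiniteDimensional ℂ M]
    (hmul : ∀ x ∈ M, ∀ y ∈ M, x * y ∈ M) {h : A} (hh : IsSelfAdjoint h) (hM : h ∈ M) :
    (quasispectrum ℝ h).Finite := by
  set m : ℕ := Module.finrank ℂ M + 1 with hm
  have hdep : ¬ LinearIndependent ℂ (fun k : Fin m => (⟨npw h k, npw_mem hmul hM k⟩ : M)) := by
    intro hli
    have := hli.fintype_card_le_finrank
    simp only [Fintype.card_fin, hm] at this
    omega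
  obtain ⟨c, hc0, k0, hk0⟩ := Fintype.not_linearIndependent_iff.mp hdep
  have hcA : ∑ k : Fin m, c k • npw h k = 0 := by
    have := congrArg (Subtype.val (p := (· ∈ M))) hc0
    simpa using this
  have hstar : ∑ k : Fin m, (starRingEnd ℂ) (c k) • npw h k = 0 := by
    have := congrArg star hcA
    rw [star_sum] at this
    simpa [star_smul, star_npw hh] using this
  -- extract a nonzero real-coefficient relation
  have hreal : ∃ b : Fin m → ℝ, (∃ k, b k ≠ 0) ∧ ∑ k : Fin m, (b k : ℂ) • npw h k = 0 := by
    by_cases hre : ∃ k, (c k).re ≠ 0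
    · obtain ⟨k1, hk1⟩ := hre
      refine ⟨fun k => 2 * (c k).re, ⟨k1, by simpa using hk1⟩, ?_⟩
      have h2 : ∑ k : Fin m, (c k + (starRingEnd ℂ) (c k)) • npw h k = 0 := by
        simp only [add_smul]
        rw [Finset.sum_add_distrib, hcA, hstar, add_zero]
      rw [← h2]
      refine Finset.sum_congr rfl fun k _ => ?_
      rw [Complex.add_conj]
    · push_neg at hre
      have him : (c k0).im ≠ 0 := by
        intro h'
        exact hk0 (Complex.ext (hre k0) h')
      refine ⟨fun k => 2 * (c k).im, ⟨k0, by simpa using him⟩, ?_⟩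
      have h2 : ∑ k : Fin m, (c k - (starRingEnd ℂ) (c k)) • npw h k = 0 := by
        simp only [sub_smul]
        rw [Finset.sum_sub_distrib, hcA, hstar, sub_zero]
      have h3 : ∑ k : Fin m, ((-Complex.I) * (c k - (starRingEnd ℂ) (c k))) • npw h k = 0 := by
        have := congrArg (fun x : A => (-Complex.I) • x) h2
        simpa [Finset.smul_sum, smul_smul] using this
      rw [← h3]
      refine Finset.sum_congr rfl fun k _ => ?_
      congr 1
      rw [Complex.sub_conj]
      calc ((2 * (c k).im : ℝ) : ℂ) = ↑(2 * (c k).im) * (-(Complex.I * Complex.I)) := by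
            rw [Complex.I_mul_I]; ring
        _ = -Complex.I * (↑(2 * (c k).im) * Complex.I) := by ring
  obtain ⟨b, ⟨k1, hbk1⟩, hb⟩ := hreal
  -- convert to ℕ-indexed
  set c' : ℕ → ℝ := fun k => if hk : k < m then b ⟨k, hk⟩ else 0 with hc'
  have hpe : cfcₙ (pfun c' m) h = 0 := by
    rw [cfcₙ_pfun hh]
    unfold pelem
    rw [← Fin.sum_univ_eq_sum_range (fun k => c' k • npw h k) m]
    rw [← hb]
    refine Finset.sum_congr rfl fun k _ => ?_
    have : c' k = b k := by simp [hc', k.isLt]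
    have hco : (b k : ℂ) • npw h k = b k • npw h k := by
      rw [← smul_one_smul ℂ (b k) (npw h k)]
      norm_num
    rw [this, ← hco]
  have hvan : ∀ x ∈ quasispectrum ℝ h, pfun c' m x = 0 := by
    intro x hx
    have := norm_apply_le_norm_cfcₙ (pfun c' m) h hx (pfun_cont c' m).continuousOn
      (pfun_zero c' m) hh
    rw [hpe, norm_zero, Real.norm_eq_abs] at this
    exact abs_eq_zero.mp (le_antisymm this (abs_nonneg _))
  -- polynomial with these coefficients
  set P : Polynomial ℝ := ∑ k ∈ Finset.range m, Polynomial.monomial (k+1) (c' k) with hP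
  have hPev : ∀ t, P.eval t = pfun c' m t := by
    intro t
    rw [hP, Polynomial.eval_finset_sum]
    exact Finset.sum_congr rfl fun k _ => Polynomial.eval_monomial
  have hPne : P ≠ 0 := by
    intro h0
    have hcoeff : P.coeff (k1 + 1) = c' k1 := by
      rw [hP, Polynomial.finset_sum_coeff]
      rw [Finset.sum_eq_single k1.val]
      · simp [Polynomial.coeff_monomial]
      · intro k hk hne
        rw [Polynomial.coeff_monomial, if_neg (by omega)]
      · intro hk
        exact absurd (Finset.mem_range.mpr k1.isLt) hk
    rw [h0] at hcoeff
    simp only [Polynomial.coeff_zero] at hcoeff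
    apply hbk1
    rw [show b k1 = c' k1 from by simp [hc', k1.isLt]]
    exact hcoeff.symm
  refine Set.Finite.subset (Polynomial.finite_setOf_isRoot hPne) ?_
  intro x hx
  show P.IsRoot x
  rw [Polynomial.IsRoot, hPev]
  exact hvan x hx


lemma exists_interp (S : Finset ℝ) (h0S : (0:ℝ) ∈ S) (v : ℝ → ℝ) (hv : v 0 = 0) :
    ∃ n c, ∀ t ∈ S, pfun c n t = v t := by
  classical
  set P : Polynomial ℝ := Lagrange.interpolate S id v with hP
  have hnode : ∀ t ∈ S, P.eval t = v t := by
    intro t ht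
    exact Lagrange.eval_interpolate_at_node v (Set.injOn_id _) ht
  have hP0 : P.coeff 0 = 0 := by
    rw [Polynomial.coeff_zero_eq_eval_zero, hnode 0 h0S, hv]
  refine ⟨P.natDegree, fun k => P.coeff (k+1), ?_⟩
  intro t ht
  rw [← hnode t ht, Polynomial.eval_eq_sum_range,
    Finset.sum_range_succ' (fun i => P.coeff i * t ^ i) P.natDegree]
  simp [pfun, hP0]

lemma npw_mem_ideal {D : Set A} (hD : IsTwoSidedIdealSet D) {h : A} (hd : h ∈ D) (k : ℕ) :
    npw h k ∈ D := by
  induction k with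
  | zero => exact hd
  | succ k ih => exact hD.2.2.2.1 h _ ih

lemma pelem_mem_ideal {D : Set A} (hD : IsTwoSidedIdealSet D) (hDc : IsClosed D) {h : A}
    (hd : h ∈ D) (c : ℕ → ℝ) (n : ℕ) : pelem c n h ∈ D := by
  unfold pelem
  refine Finset.sum_induction _ (· ∈ D) (fun x y hx hy => hD.2.1 x hx y hy) hD.1 fun k _ => ?_
  have hco : c k • npw h k = ((c k : ℂ)) • npw h k := by
    rw [← smul_one_smul ℂ (c k) (npw h k)]
    norm_num
  rw [hco]
  exact smul_mem_of_closed hD hDc _ (npw_mem_ideal hD hd k)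


end AFBratteli

set_option maxHeartbeats 2000000 in
/-- In an AF-algebra with dense locally matricial *-subalgebra `Ad`: every closed
two-sided ideal `D` equals the closure of `D ∩ Ad`. -/
theorem af_closed_ideal_eq_closure_inter {A : Type*} [NonUnitalCStarAlgebra A] (Ad : Set A)
    (hAd : IsLocallyMatricialDense Ad)
    (D : Set A) (hD : IsTwoSidedIdealSet D) (hDc : IsClosed D) :
    D = closure (D ∩ Ad) := by
  classical
  obtain ⟨hsub, hdense, hfd⟩ := hAd
  refine Set.Subset.antisymm ?_ ?_
  case refine_2 =>
    calc closure (D ∩ Ad) ⊆ closure D := closure_mono Set.inter_subset_left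
      _ = D := hDc.closure_eq
  intro x hx
  rw [Metric.mem_closure_iff]
  intro ε hε
  obtain ⟨a, haAd, hax⟩ := Metric.mem_closure_iff.mp (hdense x) (ε/2) (by positivity)
  obtain ⟨M, hMAd, haM', hMmul, hMstar, hMfin⟩ := hfd {a} (by simpa using haAd)
  have haM : a ∈ M := haM' (by simp)
  haveI := hMfin
  -- the ideal N = D ∩ M as a submodule
  let N : Submodule ℂ A :=
    { carrier := D ∩ (M : Set A)
      add_mem' := fun hu hv => ⟨hD.2.1 _ hu.1 _ hv.1, M.add_mem hu.2 hv.2⟩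
      zero_mem' := ⟨hD.1, M.zero_mem⟩
      smul_mem' := fun z u hu =>
        ⟨AFBratteli.smul_mem_of_closed hD hDc z hu.1, M.smul_mem z hu.2⟩ }
  haveI : FiniteDimensional ℂ N :=
    Submodule.finiteDimensional_of_le (S₁ := N) (S₂ := M) fun u hu => hu.2
  obtain ⟨s, hs⟩ : N.FG := Module.Finite.iff_fg.mp ‹_›
  have hsN : ∀ n ∈ s, n ∈ D ∩ (M : Set A) := fun n hn => by
    have : n ∈ N := hs ▸ Submodule.subset_span hn
    exact this
  -- the positive generator of N
  set h0 : A := ∑ n ∈ s, n * star n with hh0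
  have h0D : h0 ∈ D := by
    rw [hh0]
    exact Finset.sum_induction _ (· ∈ D) (fun u v hu hv => hD.2.1 u hu v hv) hD.1
      fun n hn => hD.2.2.2.2 (star n) n (hsN n hn).1
  have h0M : h0 ∈ M := by
    rw [hh0]
    exact Submodule.sum_mem M fun n hn =>
      hMmul n (hsN n hn).2 (star n) (hMstar n (hsN n hn).2)
  have h0sa : IsSelfAdjoint h0 := by
    rw [hh0]
    unfold IsSelfAdjoint
    rw [star_sum]
    exact Finset.sum_congr rfl fun n _ => by rw [star_mul, star_star]
  -- the unit e of N
  have hfin0 := AFBratteli.quasi_finite hMmul h0sa h0M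
  set v0 : ℝ → ℝ := fun t => if t = 0 then 0 else 1 with hv0def
  obtain ⟨n0, c0, hc0⟩ := AFBratteli.exists_interp hfin0.toFinset
    (hfin0.mem_toFinset.mpr (quasispectrum.zero_mem ℝ h0)) v0 (by simp [hv0def])
  have hEq0 : Set.EqOn (AFBratteli.pfun c0 n0) v0 (quasispectrum ℝ h0) := fun t ht =>
    hc0 t (hfin0.mem_toFinset.mpr ht)
  set e : A := cfcₙ (AFBratteli.pfun c0 n0) h0 with he
  have hepe : e = AFBratteli.pelem c0 n0 h0 := AFBratteli.cfcₙ_pfun h0sa c0 n0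
  have heM : e ∈ M := hepe ▸ AFBratteli.pelem_mem hMmul h0M c0 n0
  have heD : e ∈ D := hepe ▸ AFBratteli.pelem_mem_ideal hD hDc h0D c0 n0
  have hesa : star e = e := hepe ▸ AFBratteli.star_pelem h0sa c0 n0
  have hv0mul : ∀ t : ℝ, v0 t * v0 t = v0 t := fun t => by
    by_cases hc : t = 0 <;> simp [hv0def, hc]
  have hidem : e * e = e := by
    rw [he, ← cfcₙ_mul (AFBratteli.pfun c0 n0) (AFBratteli.pfun c0 n0) h0
      (AFBratteli.pfun_cont c0 n0).continuousOn (AFBratteli.pfun_zero c0 n0)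
      (AFBratteli.pfun_cont c0 n0).continuousOn (AFBratteli.pfun_zero c0 n0)]
    exact cfcₙ_congr fun t ht => by rw [hEq0 ht, hv0mul t, ← hEq0 ht]
  -- e is a left unit for N
  have hgen : ∀ n ∈ s, e * n = n := by
    have hPhi : h0 - h0 * e - e * h0 + e * (h0 * e) = 0 := by
      have m0 : cfcₙ (fun t : ℝ => t) h0 = h0 := cfcₙ_id' ℝ h0
      have hpc := (AFBratteli.pfun_cont c0 n0).continuousOn (s := quasispectrum ℝ h0)
      have hpz := AFBratteli.pfun_zero c0 n0
      have m1 : cfcₙ (fun t => t * AFBratteli.pfun c0 n0 t) h0 = h0 * e := by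
        rw [cfcₙ_mul (fun t : ℝ => t) (AFBratteli.pfun c0 n0) h0 (by fun_prop) (by simp)
          hpc hpz, m0, he]
      have m2 : cfcₙ (fun t => AFBratteli.pfun c0 n0 t * t) h0 = e * h0 := by
        rw [cfcₙ_mul (AFBratteli.pfun c0 n0) (fun t : ℝ => t) h0 hpc hpz
          (by fun_prop) (by simp), m0, he]
      have m3 : cfcₙ (fun t => AFBratteli.pfun c0 n0 t *
          (t * AFBratteli.pfun c0 n0 t)) h0 = e * (h0 * e) := by
        rw [cfcₙ_mul (AFBratteli.pfun c0 n0)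
          (fun t => t * AFBratteli.pfun c0 n0 t) h0 hpc hpz
          (by exact (continuous_id.mul (AFBratteli.pfun_cont c0 n0)).continuousOn)
          (by simp [hpz]), m1, he]
      have hsub1 : cfcₙ (fun t : ℝ => t - t * AFBratteli.pfun c0 n0 t) h0
          = h0 - h0 * e := by
        rw [cfcₙ_sub (fun t : ℝ => t) (fun t => t * AFBratteli.pfun c0 n0 t) h0
          (by fun_prop) (by simp)
          (by exact (continuous_id.mul (AFBratteli.pfun_cont c0 n0)).continuousOn)
          (by simp [hpz]), m0, m1]
      have hsub2 : cfcₙ (fun t : ℝ => t - t * AFBratteli.pfun c0 n0 t -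
          AFBratteli.pfun c0 n0 t * t) h0 = h0 - h0 * e - e * h0 := by
        rw [cfcₙ_sub (fun t : ℝ => t - t * AFBratteli.pfun c0 n0 t)
          (fun t => AFBratteli.pfun c0 n0 t * t) h0
          (by exact (continuous_id.sub
            (continuous_id.mul (AFBratteli.pfun_cont c0 n0))).continuousOn)
          (by simp [hpz])
          (by exact ((AFBratteli.pfun_cont c0 n0).mul continuous_id).continuousOn)
          (by simp [hpz]), hsub1, m2]
      have hadd : cfcₙ (fun t : ℝ => t - t * AFBratteli.pfun c0 n0 t -
          AFBratteli.pfun c0 n0 t * t + AFBratteli.pfun c0 n0 t *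
          (t * AFBratteli.pfun c0 n0 t)) h0
          = h0 - h0 * e - e * h0 + e * (h0 * e) := by
        rw [cfcₙ_add (fun t : ℝ => t - t * AFBratteli.pfun c0 n0 t -
          AFBratteli.pfun c0 n0 t * t)
          (fun t => AFBratteli.pfun c0 n0 t * (t * AFBratteli.pfun c0 n0 t)) h0
          (by exact ((continuous_id.sub
            (continuous_id.mul (AFBratteli.pfun_cont c0 n0))).sub
            ((AFBratteli.pfun_cont c0 n0).mul continuous_id)).continuousOn)
          (by simp [hpz])
          (by exact ((AFBratteli.pfun_cont c0 n0).mul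
            (continuous_id.mul (AFBratteli.pfun_cont c0 n0))).continuousOn)
          (by simp [hpz]), hsub2, m3]
      rw [← hadd]
      rw [show (0 : A) = cfcₙ (fun _ : ℝ => (0:ℝ)) h0 from (cfcₙ_const_zero ℝ h0).symm]
      refine cfcₙ_congr fun t ht => ?_
      show t - t * AFBratteli.pfun c0 n0 t - AFBratteli.pfun c0 n0 t * t +
        AFBratteli.pfun c0 n0 t * (t * AFBratteli.pfun c0 n0 t) = 0
      rw [hEq0 ht]
      by_cases hcase : t = 0
      · simp [hv0def, hcase]
      · simp only [hv0def, if_neg hcase]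
        ring
    -- expand the sum of positives
    have hexp : ∑ n ∈ s, (n - e * n) * star (n - e * n) = 0 := by
      have hterm : ∀ n ∈ s, (n - e * n) * star (n - e * n) =
          n * star n - n * star n * e - e * (n * star n) + e * (n * star n * e) := by
        intro n _
        rw [star_sub, star_mul, hesa]
        rw [sub_mul, mul_sub, mul_sub, mul_assoc e n (star n * e), mul_assoc e n (star n),
          ← mul_assoc n (star n) e]
        abel
      rw [Finset.sum_congr rfl hterm]
      have : ∑ n ∈ s, (n * star n - n * star n * e - e * (n * star n) +
          e * (n * star n * e)) = h0 - h0 * e - e * h0 + e * (h0 * e) := by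
        rw [hh0, Finset.sum_add_distrib, Finset.sum_sub_distrib, Finset.sum_sub_distrib,
          ← Finset.sum_mul, ← Finset.mul_sum, ← Finset.mul_sum, ← Finset.sum_mul]
      rw [this, hPhi]
    intro n hn
    have := AFBratteli.eq_zero_of_sum_mul_star s (fun n => n - e * n) hexp n hn
    have : n - e * n = 0 := this
    linear_combination (norm := abel) -this
  have hNunit : ∀ z, z ∈ D ∩ (M : Set A) → e * z = z := by
    intro z hz
    have hzN : z ∈ N := hz
    have hzspan : z ∈ Submodule.span ℂ (s : Set A) := by rw [hs]; exact hzN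
    refine Submodule.span_induction (p := fun z _ => e * z = z)
      (fun u hu => hgen u hu) (mul_zero e)
      (fun u v _ _ hu hv => by show e * (u + v) = u + v; rw [mul_add, hu, hv])
      (fun w u _ hu => by show e * (w • u) = w • u; rw [mul_smul_comm, hu]) hzspan
  -- the approximant b and the remainder p
  set b : A := e * a + a * e - e * (a * e) with hb
  have hbD : b ∈ D := by
    rw [hb, sub_eq_add_neg]
    exact hD.2.1 _ (hD.2.1 _ (hD.2.2.2.2 a e heD) _ (hD.2.2.2.1 a e heD)) _
      (hD.2.2.1 _ (hD.2.2.2.2 (a * e) e heD))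
  have hbM : b ∈ M := by
    rw [hb]
    exact M.sub_mem (M.add_mem (hMmul e heM a haM) (hMmul a haM e heM))
      (hMmul e heM _ (hMmul a haM e heM))
  set p : A := a - b with hp
  have hpM : p ∈ M := M.sub_mem haM hbM
  have hep : e * p = 0 := by
    have h1 : e * b = e * a := by
      rw [hb, mul_sub, mul_add, ← mul_assoc e e a, hidem, ← mul_assoc e e (a * e), hidem]
      abel
    rw [hp, mul_sub, h1, sub_self]
  have hpe : p * e = 0 := by
    have h1 : b * e = a * e := by
      rw [hb, sub_mul, add_mul, mul_assoc e a e, mul_assoc a e e, hidem,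
        mul_assoc e (a * e) e, mul_assoc a e e, hidem]
      abel
    rw [hp, sub_mul, h1, sub_self]
  -- the key inequality
  have hkey : ∀ d ∈ D, ‖p‖ ≤ ‖p - d‖ := by
    by_contra hcon
    push_neg at hcon
    obtain ⟨d, hdD, hlt⟩ := hcon
    have hp0 : 0 < ‖p‖ := (norm_nonneg (p - d)).trans_lt hlt
    set h : A := star p * p with hh
    have hsa : IsSelfAdjoint h := IsSelfAdjoint.star_mul_self p
    have hhM : h ∈ M := hMmul (star p) (hMstar p hpM) p hpM
    have hnh : ‖h‖ = ‖p‖ * ‖p‖ := by rw [hh]; exact CStarRing.norm_star_mul_self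
    have heh : e * h = 0 := by
      have h1 : e * star p = 0 := by
        have : star (p * e) = star e * star p := star_mul p e
        rw [hpe, star_zero, hesa] at this
        exact this.symm
      rw [hh, ← mul_assoc, h1, zero_mul]
    have hfin1 := AFBratteli.quasi_finite hMmul hsa hhM
    -- find lam in the quasispectrum with |lam| = ‖h‖
    obtain ⟨lam, hlam, hlameq⟩ :
        ∃ lam ∈ quasispectrum ℝ h, ‖lam‖ = ‖cfcₙ (fun t : ℝ => t) h‖ := by
      have := (IsGreatest.norm_cfcₙ (fun t : ℝ => t) h (by fun_prop) rfl hsa).1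
      obtain ⟨lam, hlam, hl⟩ := this
      exact ⟨lam, hlam, hl⟩
    rw [cfcₙ_id' ℝ h] at hlameq
    rw [Real.norm_eq_abs] at hlameq
    have hlam0 : lam ≠ 0 := by
      intro h'
      rw [h'] at hlameq
      simp only [abs_zero] at hlameq
      nlinarith [hlameq, hnh, hp0]
    -- the spectral projection r
    set v1 : ℝ → ℝ := fun t => if t = lam then 1 else 0 with hv1def
    obtain ⟨n1, c1, hc1⟩ := AFBratteli.exists_interp hfin1.toFinset
      (hfin1.mem_toFinset.mpr (quasispectrum.zero_mem ℝ h)) v1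
      (by simp only [hv1def]; exact if_neg (fun hc => hlam0 hc.symm))
    have hEq1 : Set.EqOn (AFBratteli.pfun c1 n1) v1 (quasispectrum ℝ h) := fun t ht =>
      hc1 t (hfin1.mem_toFinset.mpr ht)
    set r : A := cfcₙ (AFBratteli.pfun c1 n1) h with hr
    have hrpe : r = AFBratteli.pelem c1 n1 h := AFBratteli.cfcₙ_pfun hsa c1 n1
    have hrM : r ∈ M := hrpe ▸ AFBratteli.pelem_mem hMmul hhM c1 n1
    have hpc1 := (AFBratteli.pfun_cont c1 n1).continuousOn (s := quasispectrum ℝ h)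
    have hpz1 := AFBratteli.pfun_zero c1 n1
    have hv1mul : ∀ t : ℝ, v1 t * v1 t = v1 t := fun t => by
      by_cases hc : t = lam <;> simp [hv1def, hc]
    have hridem : r * r = r := by
      rw [hr, ← cfcₙ_mul (AFBratteli.pfun c1 n1) (AFBratteli.pfun c1 n1) h
        hpc1 hpz1 hpc1 hpz1]
      exact cfcₙ_congr fun t ht => by rw [hEq1 ht, hv1mul t, ← hEq1 ht]
    have hrnorm : ‖r‖ = 1 := by
      refine le_antisymm (norm_cfcₙ_le fun t ht => ?_) ?_
      · rw [Real.norm_eq_abs, hEq1 ht]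
        by_cases hcase : t = lam <;> simp [hv1def, hcase]
      · have := norm_apply_le_norm_cfcₙ (AFBratteli.pfun c1 n1) h hlam hpc1 hpz1 hsa
        rw [Real.norm_eq_abs, hEq1 hlam] at this
        simp only [hv1def, if_pos rfl] at this
        simpa using this
    have her : e * r = 0 := by
      rw [hrpe]
      exact AFBratteli.mul_pelem_eq_zero heh c1 n1
    -- r * (h * r) = lam • r
    have hrhr : r * (h * r) = lam • r := by
      have m1 : cfcₙ (fun t => t * AFBratteli.pfun c1 n1 t) h = h * r := by
        rw [cfcₙ_mul (fun t : ℝ => t) (AFBratteli.pfun c1 n1) h (by fun_prop) (by simp)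
          hpc1 hpz1, cfcₙ_id' ℝ h, hr]
      have m2 : cfcₙ (fun t => AFBratteli.pfun c1 n1 t *
          (t * AFBratteli.pfun c1 n1 t)) h = r * (h * r) := by
        rw [cfcₙ_mul (AFBratteli.pfun c1 n1)
          (fun t => t * AFBratteli.pfun c1 n1 t) h hpc1 hpz1
          (by exact (continuous_id.mul (AFBratteli.pfun_cont c1 n1)).continuousOn)
          (by simp [hpz1]), m1, hr]
      rw [← m2]
      have m3 : cfcₙ (fun t => lam * AFBratteli.pfun c1 n1 t) h = lam • r := by
        rw [cfcₙ_const_mul lam (AFBratteli.pfun c1 n1) h hpc1 hpz1, hr]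
      rw [← m3]
      refine cfcₙ_congr fun t ht => ?_
      show AFBratteli.pfun c1 n1 t * (t * AFBratteli.pfun c1 n1 t) =
        lam * AFBratteli.pfun c1 n1 t
      rw [hEq1 ht]
      by_cases hcase : t = lam
      · subst hcase
        simp only [hv1def, if_pos rfl]
        ring
      · simp only [hv1def, if_neg hcase]; ring
    -- the approximating ideal element in the corner
    set d2 : A := r * (star p * (d * r)) with hd2
    have hd2D : d2 ∈ D :=
      hD.2.2.2.1 r _ (hD.2.2.2.1 (star p) _ (hD.2.2.2.2 r d hdD))
    have hrd2 : r * d2 = d2 := by rw [hd2, ← mul_assoc, hridem]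
    have hd2r : d2 * r = d2 := by
      rw [hd2]
      calc r * (star p * (d * r)) * r = r * (star p * (d * r) * r) := by rw [mul_assoc]
        _ = r * (star p * (d * r * r)) := by rw [mul_assoc (star p)]
        _ = r * (star p * (d * (r * r))) := by rw [mul_assoc d r r]
        _ = r * (star p * (d * r)) := by rw [hridem]
    have hdiff : lam • r - d2 = r * (star p * ((p - d) * r)) := by
      have h1 : r * (star p * (p * r)) = lam • r := by
        rw [← mul_assoc (star p) p r, ← hh, hrhr]
      rw [sub_mul, mul_sub, mul_sub, h1, hd2]
    have hnormd : ‖lam • r - d2‖ < ‖h‖ := by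
      rw [hdiff]
      calc ‖r * (star p * ((p - d) * r))‖ ≤ ‖r‖ * ‖star p * ((p - d) * r)‖ :=
            norm_mul_le _ _
        _ ≤ ‖r‖ * (‖star p‖ * ‖(p - d) * r‖) := by
            exact mul_le_mul_of_nonneg_left (norm_mul_le _ _) (norm_nonneg r)
        _ ≤ ‖r‖ * (‖star p‖ * (‖p - d‖ * ‖r‖)) := by
            refine mul_le_mul_of_nonneg_left ?_ (norm_nonneg r)
            exact mul_le_mul_of_nonneg_left (norm_mul_le _ _) (norm_nonneg (star p))
        _ = ‖p - d‖ * ‖p‖ := by rw [hrnorm, norm_star]; ring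
        _ < ‖p‖ * ‖p‖ := by exact mul_lt_mul_of_pos_right hlt hp0
        _ = ‖h‖ := hnh.symm
    set c2 : A := lam⁻¹ • d2 with hc2
    have hc2D : c2 ∈ D := by
      have : c2 = ((lam⁻¹ : ℝ) : ℂ) • d2 := by
        rw [hc2, ← smul_one_smul ℂ (lam⁻¹) d2]
        norm_num
      rw [this]
      exact AFBratteli.smul_mem_of_closed hD hDc _ hd2D
    have hrc2 : r * c2 = c2 := by rw [hc2, mul_smul_comm, hrd2]
    have hc2r : c2 * r = c2 := by rw [hc2, smul_mul_assoc, hd2r]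
    have hnorm1 : ‖r - c2‖ < 1 := by
      have hid : r - c2 = lam⁻¹ • (lam • r - d2) := by
        rw [smul_sub, smul_smul, inv_mul_cancel₀ hlam0, one_smul, hc2]
      rw [hid, norm_smul, Real.norm_eq_abs, abs_inv]
      calc |lam|⁻¹ * ‖lam • r - d2‖ < |lam|⁻¹ * ‖h‖ := by
            refine mul_lt_mul_of_pos_left hnormd ?_
            rw [inv_pos, hlameq, hnh]
            positivity
        _ = 1 := by
            have hhne : ‖h‖ ≠ 0 := by rw [hnh]; exact (mul_pos hp0 hp0).ne'
            rw [hlameq, inv_mul_cancel₀ hhne]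
    have hrD : r ∈ D := AFBratteli.idem_mem hD hridem hc2D hrc2 hc2r hnorm1
    have : e * r = r := hNunit r ⟨hrD, hrM⟩
    rw [her] at this
    rw [← this] at hrnorm
    simp at hrnorm
  -- conclusion
  have hdx : x - b ∈ D := by
    rw [sub_eq_add_neg]
    exact hD.2.1 x hx _ (hD.2.2.1 b hbD)
  have hpb : ‖p‖ < ε / 2 := by
    have h1 : p - (x - b) = a - x := by rw [hp]; abel
    have := hkey (x - b) hdx
    rw [h1] at this
    calc ‖p‖ ≤ ‖a - x‖ := this
      _ = dist x a := by rw [dist_eq_norm, ← norm_neg]; congr 1; abel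
      _ < ε / 2 := hax
  refine ⟨b, ⟨hbD, hMAd hbM⟩, ?_⟩
  calc dist x b ≤ dist x a + dist a b := dist_triangle x a b
    _ < ε / 2 + ε / 2 := by
        refine add_lt_add hax ?_
        rw [dist_eq_norm, ← hp]
        exact hpb
    _ = ε := by ring
end

section
/- Let A be a C*-algebra, p a projection in A, and z a self-adjoint element with ‖z − p‖ < 1/2. Then there exists a positive element R ∈ A such that R z R is a projection (obtained via functional calculus), and ‖R z R − p‖ ≤ 2‖z − p‖/(1 − 2‖z − p‖). -/
def IsProjectionElem {A : Type*} [NonUnitalRing A] [StarRing A] (p : A) : Prop :=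
  p * p = p ∧ star p = p

/-- If `p` is a projection in a unital C*-algebra and `z` is self-adjoint with
`‖z - p‖ < 1/2`, then there is a positive `R` such that `R z R` is a projection and
`‖R z R - p‖ ≤ 2‖z - p‖ / (1 - 2‖z - p‖)`. -/
theorem exists_pos_conj_projection {A : Type*} [CStarAlgebra A]
    [PartialOrder A] [StarOrderedRing A]
    (p z : A) (hp : IsProjectionElem p) (hz : IsSelfAdjoint z)
    (hclose : ‖z - p‖ < 1 / 2) :
    ∃ R : A, 0 ≤ R ∧ IsProjectionElem (R * z * R) ∧
      ‖R * z * R - p‖ ≤ 2 * ‖z - p‖ / (1 - 2 * ‖z - p‖) := by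
  rcases subsingleton_or_nontrivial A with hA | hA
  · refine ⟨0, le_of_eq (Subsingleton.elim _ _),
      ⟨Subsingleton.elim _ _, Subsingleton.elim _ _⟩, ?_⟩
    rw [Subsingleton.elim (0 * z * 0 - p) (0 : A), Subsingleton.elim (z - p) (0 : A), norm_zero]
    norm_num
  obtain ⟨hp2, hps⟩ := hp
  have hpsa : IsSelfAdjoint p := hps
  set δ := ‖z - p‖ with hδdef
  have hδ0 : (0:ℝ) ≤ δ := norm_nonneg _
  -- spectrum of p is contained in {0, 1}
  have hspecp : ∀ s ∈ spectrum ℝ p, s = 0 ∨ s = 1 := by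
    intro s hs
    have h1 : s ^ 2 - s ∈ spectrum ℝ ((Polynomial.aeval p) (Polynomial.X ^ 2 - Polynomial.X : Polynomial ℝ)) :=
      spectrum.subset_polynomial_aeval p (Polynomial.X ^ 2 - Polynomial.X) ⟨s, hs, by simp⟩
    have h2 : (Polynomial.aeval p) (Polynomial.X ^ 2 - Polynomial.X : Polynomial ℝ) = 0 := by
      simp [sq, hp2]
    rw [h2, spectrum.zero_eq] at h1
    have h3 : s * (s - 1) = 0 := by
      have : s ^ 2 - s = 0 := h1
      nlinarith [this]
    rcases mul_eq_zero.mp h3 with h | h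
    · exact Or.inl h
    · exact Or.inr (by linarith)
  -- spectrum of z is contained in the δ-neighborhood of {0, 1}
  have hspecz : ∀ t ∈ spectrum ℝ z, |t| ≤ δ ∨ |t - 1| ≤ δ := by
    intro t ht
    by_contra hcon
    push_neg at hcon
    obtain ⟨h1, h2⟩ := hcon
    set m := min |t| |t - 1| with hmdef
    have hm : δ < m := lt_min h1 h2
    have hm0 : (0:ℝ) < m := lt_of_le_of_lt hδ0 hm
    have hts : ∀ s ∈ spectrum ℝ p, m ≤ |t - s| := by
      intro s hs
      rcases hspecp s hs with rfl | rfl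
      · rw [sub_zero]; exact min_le_left _ _
      · exact min_le_right _ _
    have hts0 : ∀ s ∈ spectrum ℝ p, t - s ≠ 0 := by
      intro s hs
      have := hts s hs
      intro hc
      rw [hc] at this
      simp only [abs_zero] at this
      linarith
    have hcont : ContinuousOn (fun s : ℝ => (t - s)⁻¹) (spectrum ℝ p) :=
      ContinuousOn.inv₀ (by fun_prop) hts0
    set u := cfc (fun s : ℝ => (t - s)⁻¹) p with hudef
    have hrepr : algebraMap ℝ A t - p = cfc (fun s : ℝ => t - s) p := by
      rw [cfc_sub (fun _ : ℝ => t) (fun s : ℝ => s) p (by fun_prop) (by fun_prop),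
        cfc_const t p, cfc_id' ℝ p]
    have hmul : (algebraMap ℝ A t - p) * u = 1 := by
      rw [hrepr, hudef, ← cfc_mul _ _ p (by fun_prop) hcont, ← cfc_one ℝ p]
      exact cfc_congr fun s hs => mul_inv_cancel₀ (hts0 s hs)
    have hmul' : u * (algebraMap ℝ A t - p) = 1 := by
      rw [hrepr, hudef, ← cfc_mul _ _ p hcont (by fun_prop), ← cfc_one ℝ p]
      exact cfc_congr fun s hs => inv_mul_cancel₀ (hts0 s hs)
    have hnormu : ‖u‖ ≤ m⁻¹ := by
      refine norm_cfc_le (by positivity) fun s hs => ?_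
      rw [Real.norm_eq_abs, abs_inv]
      exact inv_anti₀ hm0 (hts s hs)
    have hsmall : ‖u * (z - p)‖ < 1 := by
      calc ‖u * (z - p)‖ ≤ ‖u‖ * δ := norm_mul_le _ _
        _ ≤ m⁻¹ * δ := by
            exact mul_le_mul_of_nonneg_right hnormu hδ0
        _ < 1 := by
            rw [inv_mul_lt_iff₀ hm0, mul_one]
            exact hm
    have hunitp : IsUnit (algebraMap ℝ A t - p) := ⟨⟨_, u, hmul, hmul'⟩, rfl⟩
    have hkey : algebraMap ℝ A t - z = (algebraMap ℝ A t - p) * (1 - u * (z - p)) := by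
      rw [mul_sub, mul_one, ← mul_assoc, hmul, one_mul]
      abel
    have : IsUnit (algebraMap ℝ A t - z) := by
      rw [hkey]
      exact hunitp.mul (isUnit_one_sub_of_norm_lt_one hsmall)
    exact spectrum.mem_iff.mp ht this
  -- the building blocks of the functional calculus
  set ε := (1/2 - δ)/2 with hεdef
  have hε : 0 < ε := by
    rw [hεdef]
    linarith
  set r : ℝ → ℝ := fun t => min 1 (max 0 ((t - (1/2 - ε))/(2*ε))) with hrdef
  set f : ℝ → ℝ := fun t => r t * (Real.sqrt (max t (1/2)))⁻¹ with hfdef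
  set h : ℝ → ℝ := fun t => f t * t * f t with hhdef
  have hsqrtpos : ∀ t : ℝ, 0 < Real.sqrt (max t (1/2)) := fun t =>
    Real.sqrt_pos.mpr (lt_of_lt_of_le (by norm_num) (le_max_right _ _))
  have hfc : Continuous f := by
    apply Continuous.mul
    · exact continuous_const.min ((continuous_const.max (by fun_prop)))
    · exact Continuous.inv₀ (Real.continuous_sqrt.comp (continuous_id.max continuous_const))
        fun t => (hsqrtpos t).ne'
  have hhc : Continuous h := (hfc.mul continuous_id).mul hfc
  -- values of h on the spectrum
  have hh0 : ∀ t : ℝ, |t| ≤ δ → h t = 0 := by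
    intro t htle
    have ht : t ≤ δ := le_of_abs_le htle
    have : (t - (1/2 - ε))/(2*ε) ≤ 0 := by
      apply div_nonpos_of_nonpos_of_nonneg
      · rw [hεdef]; linarith
      · positivity
    have hr0 : r t = 0 := by
      rw [hrdef]
      simp only
      rw [max_eq_left this, min_eq_right zero_le_one]
    simp [hhdef, hfdef, hr0]
  have hh1 : ∀ t : ℝ, |t - 1| ≤ δ → h t = 1 := by
    intro t htle
    have ht : 1 - δ ≤ t := by
      have := abs_le.mp htle
      linarith [this.1]
    have htpos : (1:ℝ)/2 ≤ t := by linarith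
    have hr1 : r t = 1 := by
      rw [hrdef]
      simp only
      rw [min_eq_left]
      apply le_max_of_le_right
      rw [le_div_iff₀ (by positivity)]
      rw [hεdef]
      linarith
    have hmax : max t (1/2) = t := max_eq_left htpos
    rw [hhdef, hfdef]
    simp only [hr1, one_mul, hmax]
    have heq : (Real.sqrt t)⁻¹ * t * (Real.sqrt t)⁻¹ = t / (Real.sqrt t * Real.sqrt t) := by
      rw [div_eq_mul_inv, mul_inv]
      ring
    rw [heq, Real.mul_self_sqrt (by linarith : (0:ℝ) ≤ t), div_self (by linarith : t ≠ 0)]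
  have hid : ∀ t ∈ spectrum ℝ z, h t = 0 ∨ h t = 1 := by
    intro t ht
    rcases hspecz t ht with h' | h'
    · exact Or.inl (hh0 t h')
    · exact Or.inr (hh1 t h')
  refine ⟨cfc f z, cfc_nonneg fun x _ => ?_, ?_, ?_⟩
  · rw [hfdef]
    apply mul_nonneg
    · exact le_min zero_le_one (le_max_left _ _)
    · positivity
  · -- R z R = cfc h z is a projection
    have hRzR : cfc h z = cfc f z * z * cfc f z := by
      calc cfc h z = cfc (fun t => (f t * t) * f t) z := rfl
        _ = cfc (fun t => f t * t) z * cfc f z :=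
            cfc_mul _ _ z ((hfc.mul continuous_id).continuousOn) hfc.continuousOn
        _ = cfc f z * cfc (fun t : ℝ => t) z * cfc f z := by
            rw [cfc_mul f (fun t : ℝ => t) z hfc.continuousOn continuous_id.continuousOn]
        _ = cfc f z * z * cfc f z := by rw [cfc_id' ℝ z hz]
    rw [← hRzR]
    constructor
    · rw [← cfc_mul _ _ z hhc.continuousOn hhc.continuousOn]
      apply cfc_congr
      intro t ht
      rcases hid t ht with h' | h' <;> simp [h']
    · exact cfc_predicate h z
  · -- norm estimate
    have hRzR : cfc h z = cfc f z * z * cfc f z := by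
      calc cfc h z = cfc (fun t => (f t * t) * f t) z := rfl
        _ = cfc (fun t => f t * t) z * cfc f z :=
            cfc_mul _ _ z ((hfc.mul continuous_id).continuousOn) hfc.continuousOn
        _ = cfc f z * cfc (fun t : ℝ => t) z * cfc f z := by
            rw [cfc_mul f (fun t : ℝ => t) z hfc.continuousOn continuous_id.continuousOn]
        _ = cfc f z * z * cfc f z := by rw [cfc_id' ℝ z hz]
    rw [← hRzR]
    have hnear : ‖cfc h z - z‖ ≤ δ := by
      have : cfc h z - z = cfc (fun t => h t - t) z := by
        rw [cfc_sub h (fun t : ℝ => t) z hhc.continuousOn (by fun_prop), cfc_id' ℝ z]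
      rw [this]
      refine norm_cfc_le hδ0 fun t ht => ?_
      rw [Real.norm_eq_abs]
      rcases hspecz t ht with h' | h'
      · rw [hh0 t h']
        simpa using h'
      · rw [hh1 t h']
        rw [abs_sub_comm]
        exact h'
    have htri : ‖cfc h z - p‖ ≤ 2 * δ := by
      calc ‖cfc h z - p‖ ≤ ‖cfc h z - z‖ + ‖z - p‖ := norm_sub_le_norm_sub_add_norm_sub _ _ _
        _ ≤ δ + δ := by rw [hδdef]; exact add_le_add hnear le_rfl
        _ = 2 * δ := by ring
    refine htri.trans ?_
    rw [le_div_iff₀ (by linarith)]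
    nlinarith
end

section
/- Let A be a C*-algebra, h ∈ A positive, R ∈ A, and suppose P := R h² R* is an infinite projection in A. Then the hereditary subalgebra closure(hAh) contains an infinite projection; explicitly, Rh is a partial isometry with initial projection hR*Rh ∈ closure(hAh), and hR*Rh is an infinite projection. -/
def IsPartialIsom {A : Type*} [NonUnitalRing A] [StarRing A] (s : A) : Prop :=
  s * star s * s = s

/-- An infinite projection: Murray–von Neumann equivalent to a proper subprojection of
itself (`e ≤ p` for projections is expressed algebraically as `e * p = e`). -/
def IsInfiniteProjection {A : Type*} [NonUnitalRing A] [StarRing A] (p : A) : Prop :=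
  IsProjectionElem p ∧ ∃ s : A, IsPartialIsom s ∧ star s * s = p ∧
    (s * star s) * p = s * star s ∧ s * star s ≠ p

private lemma reassoc_of {A : Type*} [NonUnitalRing A] {a b c : A} (hab : a * b = c)
    (x : A) : a * (b * x) = c * x := by rw [← mul_assoc, hab]

/-- If `h ≥ 0`, `R ∈ A` and `P = R h² R*` is an infinite projection, then `R h` is a
partial isometry whose initial projection `h R* R h` lies in the hereditary subalgebra
`closure (h A h)` and is itself an infinite projection. -/
theorem hereditary_contains_infinite_projection {A : Type*} [NonUnitalCStarAlgebra A]
    [PartialOrder A] [StarOrderedRing A]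
    (h R : A) (hh : 0 ≤ h)
    (hP : IsInfiniteProjection (R * (h * h) * star R)) :
    IsPartialIsom (R * h) ∧
      h * star R * R * h ∈ closure {x : A | ∃ a : A, x = h * a * h} ∧
      IsInfiniteProjection (h * star R * R * h) := by
  have hsh : star h = h := (IsSelfAdjoint.of_nonneg hh).star_eq
  obtain ⟨⟨hP2, hPst⟩, V, hVpi, hVV, hVVle, hVVne⟩ := hP
  set s := R * h with hs
  have hss : R * (h * h) * star R = s * star s := by
    rw [hs, star_mul, hsh]; simp only [mul_assoc]
  rw [hss] at hP2 hPst hVV hVVle hVVne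
  -- right-associated versions of the projection identity
  have hP2' : s * (star s * (s * star s)) = s * star s := by
    simpa only [mul_assoc] using hP2
  have hP2'' : ∀ x : A, s * (star s * (s * (star s * x))) = s * (star s * x) := fun x => by
    calc s * (star s * (s * (star s * x))) = s * star s * (s * star s) * x := by
          simp only [mul_assoc]
      _ = s * star s * x := by rw [hP2]
      _ = s * (star s * x) := by rw [mul_assoc]
  -- `s` is a partial isometry
  have hpi : s * star s * s = s := by
    have hzero : (s - s * star s * s) * star (s - s * star s * s) = 0 := by
      simp only [star_sub, star_mul, star_star, sub_mul, mul_sub, mul_assoc, hP2'', hP2']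
      abel
    exact (sub_eq_zero.mp ((CStarRing.mul_star_self_eq_zero_iff _).mp hzero)).symm
  have hpi' : s * (star s * s) = s := by simpa only [mul_assoc] using hpi
  have hpi'' : ∀ x : A, s * (star s * (s * x)) = s * x := fun x => by
    calc s * (star s * (s * x)) = s * star s * s * x := by simp only [mul_assoc]
      _ = s * x := by rw [hpi]
  -- basic consequences for V
  have hVVle' : s * star s * (V * star V) = V * star V := by
    have := congrArg star hVVle
    simp only [star_mul, star_star] at this
    exact this
  have f_eV : s * star s * V = V := by
    calc s * star s * V = s * star s * (V * star V * V) := by rw [hVpi]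
      _ = s * star s * (V * star V) * V := by simp only [mul_assoc]
      _ = V * star V * V := by rw [hVVle']
      _ = V := hVpi
  have f_eV' : ∀ x : A, s * (star s * (V * x)) = V * x := fun x => by
    calc s * (star s * (V * x)) = s * star s * V * x := by simp only [mul_assoc]
      _ = V * x := by rw [f_eV]
  have f_Ve : V * (s * star s) = V := by
    rw [← hVV, ← mul_assoc, hVpi]
  have f_Ve' : ∀ x : A, V * (s * (star s * x)) = V * x := fun x => by
    calc V * (s * (star s * x)) = V * (s * star s) * x := by simp only [mul_assoc]
      _ = V * x := by rw [f_Ve]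
  have f_VV' : ∀ x : A, star V * (V * x) = s * (star s * x) := fun x => by
    calc star V * (V * x) = star V * V * x := by rw [mul_assoc]
      _ = s * star s * x := by rw [hVV]
      _ = s * (star s * x) := by rw [mul_assoc]
  -- the target projection
  have hqs : h * star R * R * h = star s * s := by
    rw [hs, star_mul, hsh]; simp only [mul_assoc]
  refine ⟨hpi, ?_, ?_⟩
  · exact subset_closure ⟨star R * R, by simp only [mul_assoc]⟩
  rw [hqs]
  -- the witness partial isometry
  set W : A := star s * (V * s) with hW
  have hWstar : star W = star s * (star V * s) := by
    simp only [hW, star_mul, star_star, mul_assoc]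
  have hWW : star W * W = star s * s := by
    rw [hWstar, hW]
    calc star s * (star V * s) * (star s * (V * s))
        = star s * (star V * (s * (star s * (V * s)))) := by simp only [mul_assoc]
      _ = star s * (star V * (V * s)) := by rw [f_eV']
      _ = star s * (s * (star s * s)) := by rw [f_VV']
      _ = star s * s := by rw [hpi']
  have hWWs : W * star W = star s * (V * (star V * s)) := by
    rw [hW, hWstar]
    calc star s * (V * s) * (star s * (star V * s))
        = star s * (V * (s * (star s * (star V * s)))) := by simp only [mul_assoc]
      _ = star s * (V * (star V * s)) := by rw [f_Ve']
  refine ⟨⟨?_, ?_⟩, W, ?_, hWW, ?_, ?_⟩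
  · -- q * q = q
    calc star s * s * (star s * s) = star s * (s * (star s * s)) := by simp only [mul_assoc]
      _ = star s * s := by rw [hpi']
  · simp only [star_mul, star_star]
  · -- W is a partial isometry
    show W * star W * W = W
    rw [mul_assoc, hWW, hW]
    calc star s * (V * s) * (star s * s) = star s * (V * (s * (star s * s))) := by
          simp only [mul_assoc]
      _ = star s * (V * s) := by rw [hpi']
  · -- W W* ≤ q
    rw [hWWs]
    calc star s * (V * (star V * s)) * (star s * s)
        = star s * (V * (star V * (s * (star s * s)))) := by simp only [mul_assoc]
      _ = star s * (V * (star V * s)) := by rw [hpi']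
  · -- W W* ≠ q
    rw [hWWs]
    intro heq
    apply hVVne
    calc V * star V = s * star s * (V * star V) := (hVVle').symm
      _ = s * star s * (V * star V * (s * star s)) := by rw [hVVle]
      _ = s * (star s * (V * (star V * s)) * star s) := by simp only [mul_assoc]
      _ = s * (star s * s * star s) := by rw [heq]
      _ = s * (star s * (s * star s)) := by rw [mul_assoc (star s) s (star s)]
      _ = s * star s := hP2'
end

section
/- If A ⊗ D is purely infinite for C*-algebras A and D, where D is unital and commutative (the tensor product being the minimal one), then A is purely infinite. -/
/-- A hereditary C*-subalgebra, characterised algebraically: a closed *-subalgebra `H`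
with `H A H ⊆ H`. -/
def IsHereditarySubalgebra {A : Type*} [NonUnitalCStarAlgebra A] (H : Set A) : Prop :=
  IsClosed H ∧ (0 : A) ∈ H ∧ (∀ x ∈ H, ∀ y ∈ H, x + y ∈ H) ∧ (∀ x ∈ H, -x ∈ H) ∧
    (∀ c : ℂ, ∀ x ∈ H, c • x ∈ H) ∧ (∀ x ∈ H, ∀ y ∈ H, x * y ∈ H) ∧
    (∀ x ∈ H, star x ∈ H) ∧ ∀ x ∈ H, ∀ y ∈ H, ∀ a : A, x * a * y ∈ H

/-- A C*-algebra is purely infinite if every nonzero hereditary C*-subalgebra contains an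
infinite projection. -/
def IsPurelyInfinite (A : Type*) [NonUnitalCStarAlgebra A] : Prop :=
  ∀ H : Set A, IsHereditarySubalgebra H → H ≠ {0} → ∃ p ∈ H, IsInfiniteProjection p

/-- If `A ⊗ D` is purely infinite, where `D` is a unital commutative C*-algebra, then `A`
is purely infinite.  By Gelfand duality `D ≅ C(X)` for a nonempty compact Hausdorff
space `X`, and the minimal tensor product `A ⊗ D` is `C(X, A)`. -/
theorem purelyInfinite_of_purelyInfinite_tensor_commutative
    {A : Type*} [NonUnitalCStarAlgebra A]
    (X : Type*) [TopologicalSpace X] [CompactSpace X] [T2Space X] [Nonempty X]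
    (hAD : IsPurelyInfinite C(X, A)) :
    IsPurelyInfinite A := by
  intro H hH hHne
  obtain ⟨hcl, h0, hadd, hneg, hsmul, hmul, hstar, hher⟩ := hH
  -- the lifted hereditary subalgebra of C(X, A)
  set Ht : Set C(X, A) := {f | ∀ x, f x ∈ H} with hHt
  have hHtHer : IsHereditarySubalgebra Ht := by
    refine ⟨?_, fun x => h0, fun f hf g hg x => hadd _ (hf x) _ (hg x),
      fun f hf x => hneg _ (hf x), fun c f hf x => hsmul c _ (hf x),
      fun f hf g hg x => hmul _ (hf x) _ (hg x),
      fun f hf x => hstar _ (hf x),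
      fun f hf g hg a x => hher _ (hf x) _ (hg x) (a x)⟩
    have : Ht = ⋂ x : X, (fun f : C(X, A) => f x) ⁻¹' H := by
      ext f; simp [hHt, Set.mem_iInter]
    rw [this]
    exact isClosed_iInter fun x => hcl.preimage (ContinuousEvalConst.continuous_eval_const x)
  have hHtne : Ht ≠ {0} := by
    have : ∃ h ∈ H, h ≠ (0 : A) := by
      by_contra hcon
      push_neg at hcon
      apply hHne
      ext a
      simp only [Set.mem_singleton_iff]
      exact ⟨fun ha => hcon a ha, fun ha => ha ▸ h0⟩
    obtain ⟨h, hh, hh0⟩ := this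
    intro hcontra
    have hmem : (ContinuousMap.const X h : C(X, A)) ∈ Ht := fun x => hh
    rw [hcontra, Set.mem_singleton_iff] at hmem
    exact hh0 (by simpa using DFunLike.congr_fun hmem (Classical.arbitrary X))
  obtain ⟨p, hpHt, ⟨hp2, hpstar⟩, s, hs, hssp, hsp, hsne⟩ := hAD Ht hHtHer hHtne
  have hx : ∃ x : X, (s * star s) x ≠ p x := by
    by_contra hcon
    push_neg at hcon
    exact hsne (ContinuousMap.ext hcon)
  obtain ⟨x, hxne⟩ := hx
  refine ⟨p x, hpHt x, ⟨?_, ?_⟩, s x, ?_, ?_, ?_, ?_⟩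
  · simpa using DFunLike.congr_fun hp2 x
  · simpa using DFunLike.congr_fun hpstar x
  · simpa [IsPartialIsom] using DFunLike.congr_fun hs x
  · simpa using DFunLike.congr_fun hssp x
  · simpa using DFunLike.congr_fun hsp x
  · simpa using hxne
end
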